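/- arXiv:2508.20045 — 4 statements merged into one kernel-verified Lean document; each statement's English description precedes it below -/
import Mathlib

section
/- Let K ⊆ ℝⁿ be closed and suppose K is forward invariant for the constrained differential inclusion Σ. Then F(x) ⊆ T_K(x) for every x ∈ ∂K ∩ int(C). -/
open MeasureTheory Filter Topology Set
open scoped RealInnerProductSpace

/-- Euclidean space ℝⁿ. -/
abbrev Euc (n : ℕ) := EuclideanSpace ℝ (Fin n)

variable {E : Type*} [NormedAddCommGroup E] [InnerProductSpace ℝ E]

/-- The contingent (Bouligand) cone to `S` at `x`:
`v` belongs to it iff there are sequences `tᵢ → 0⁺` and `vᵢ → v` with `x + tᵢ • vᵢ ∈ S`. -/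
def contingentCone (S : Set E) (x : E) : Set E :=
  {v | ∃ t : ℕ → ℝ, ∃ w : ℕ → E,
    (∀ i, 0 < t i) ∧ Tendsto t atTop (𝓝 0) ∧ Tendsto w atTop (𝓝 v) ∧
    ∀ i, x + t i • w i ∈ S}

/-- The adjacent cone to `S` at `x`:
`v` belongs to it iff for every sequence `tᵢ → 0⁺` there is `vᵢ → v` with `x + tᵢ • vᵢ ∈ S`. -/
def adjacentCone (S : Set E) (x : E) : Set E :=
  {v | ∀ t : ℕ → ℝ, (∀ i, 0 < t i) → Tendsto t atTop (𝓝 0) →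
    ∃ w : ℕ → E, Tendsto w atTop (𝓝 v) ∧ ∀ i, x + t i • w i ∈ S}

/-- The Dubovitskiy cone to `S` at `x`. -/
def dubovitskiyCone (S : Set E) (x : E) : Set E :=
  {v | ∀ t : ℕ → ℝ, ∀ w : ℕ → E, (∀ i, 0 < t i) → Tendsto t atTop (𝓝 0) →
    Tendsto w atTop (𝓝 v) → ∀ᶠ i in atTop, x + t i • w i ∈ interior S}

/-- Lower semicontinuity of a set-valued map at a point along a filter `l`. -/
def SVLowerSemicontinuousAt (F : E → Set E) (l : Filter E) (x : E) : Prop :=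
  ∀ U : Set E, IsOpen U → (F x ∩ U).Nonempty → ∀ᶠ y in l, (F y ∩ U).Nonempty

/-- Upper semicontinuity of a set-valued map at a point along a filter `l`. -/
def SVUpperSemicontinuousAt (F : E → Set E) (l : Filter E) (x : E) : Prop :=
  ∀ U : Set E, IsOpen U → F x ⊆ U → ∀ᶠ y in l, F y ⊆ U

/-- Continuity (lower and upper semicontinuity) of a set-valued map at `x` along `l`. -/
def SVContinuousAt (F : E → Set E) (l : Filter E) (x : E) : Prop :=
  SVLowerSemicontinuousAt F l x ∧ SVUpperSemicontinuousAt F l x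

/-- Continuity of a set-valued map. -/
def SVContinuous (F : E → Set E) : Prop := ∀ x, SVContinuousAt F (𝓝 x) x

/-- Local boundedness of a set-valued map. -/
def SVLocallyBounded (F : E → Set E) : Prop :=
  ∀ x : E, ∃ N ∈ 𝓝 x, ∃ M : ℝ, ∀ y ∈ N, ∀ v ∈ F y, ‖v‖ ≤ M

/-- One-sided local Lipschitz continuity of a set-valued map. -/
def OneSidedLocallyLipschitz (F : E → Set E) : Prop :=
  ∀ N : Set E, N.Nonempty → IsCompact N → ∃ k > 0, ∀ x₁ ∈ N, ∀ x₂ ∈ N,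
    ∀ w₁ ∈ F x₁, ∃ w₂ ∈ F x₂, ⟪x₁ - x₂, w₁⟫ ≤ ⟪x₁ - x₂, w₂⟫ + k * ‖x₁ - x₂‖ ^ 2

/-- The standing assumption (SA): `C` closed; `F x` nonempty, closed, convex on `C`;
`F` continuous and one-sided locally Lipschitz. -/
structure StandingAssumption (F : E → Set E) (C : Set E) : Prop where
  closed_C : IsClosed C
  nonempty_images : ∀ x ∈ C, (F x).Nonempty
  closed_images : ∀ x ∈ C, IsClosed (F x)
  convex_images : ∀ x ∈ C, Convex ℝ (F x)
  continuous : SVContinuous F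
  osLipschitz : OneSidedLocallyLipschitz F

/-- Admissible solution domains: `[0,T]` with `T ≥ 0`, or `[0,T)` with `T ∈ (0,∞]`. -/
def IsSolDomain (D : Set ℝ) : Prop :=
  (∃ T : ℝ, 0 ≤ T ∧ D = Icc 0 T) ∨ (∃ T : ℝ, 0 < T ∧ D = Ico 0 T) ∨ D = Ici 0

/-- `φ` is a solution of the constrained differential inclusion `ẋ ∈ F(x)`, `x ∈ C`,
on the domain `D`: it stays in `C` and is a locally absolutely continuous arc whose
derivative is an integrable selection of `F ∘ φ` almost everywhere. -/
def IsSolution (F : E → Set E) (C : Set E) (D : Set ℝ) (φ : ℝ → E) : Prop :=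
  IsSolDomain D ∧ (∀ t ∈ D, φ t ∈ C) ∧
  ∃ g : ℝ → E,
    (∀ᵐ t ∂(volume.restrict D), g t ∈ F (φ t)) ∧
    ∀ t ∈ D, IntervalIntegrable g volume 0 t ∧ φ t = φ 0 + ∫ s in (0:ℝ)..t, g s

/-- Forward invariance of `K` for the constrained differential inclusion. -/
def ForwardInvariant (F : E → Set E) (C K : Set E) : Prop :=
  ∀ D : Set ℝ, ∀ φ : ℝ → E, IsSolution F C D φ → φ 0 ∈ K → ∀ t ∈ D, φ t ∈ K

/-- The set 𝒫 of critical points: points of `∂K ∩ ∂C` every neighborhood of which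
meets `C \ K`. -/
def critSet (K C : Set E) : Set E :=
  {x | x ∈ frontier K ∩ frontier C ∧ ∀ N ∈ 𝓝 x, (N ∩ (C \ K)).Nonempty}

/-- The set of initial speeds `F_φ(x)` of an arc `φ` at `x`. -/
def initialSpeeds (φ : ℝ → E) (x : E) : Set E :=
  {v | ∃ t : ℕ → ℝ, (∀ i, 0 < t i) ∧ Tendsto t atTop (𝓝 0) ∧
    Tendsto (fun i => (t i)⁻¹ • (φ (t i) - x)) atTop (𝓝 v)}

/-- The metric projection of `y` onto `S`. -/
def projSet (S : Set E) (y : E) : Set E := {z ∈ S | dist y z = Metric.infDist y S}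

/-- `φ` leaves `K` immediately: for some `T > 0`, `φ(t) ∈ C \ K` on `(0,T]`. -/
def LeavesImmediately (K C : Set E) (D : Set ℝ) (φ : ℝ → E) : Prop :=
  ∃ T > 0, Ioc 0 T ⊆ D ∧ ∀ t ∈ Ioc 0 T, φ t ∈ C \ K

/-- Property (★): for some `T > 0`, `Proj_{∂K}(φ(t)) ∩ int C ≠ ∅` on `(0,T]`. -/
def PropStar (K C : Set E) (D : Set ℝ) (φ : ℝ → E) : Prop :=
  ∃ T > 0, Ioc 0 T ⊆ D ∧
    ∀ t ∈ Ioc 0 T, (projSet (frontier K) (φ t) ∩ interior C).Nonempty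

/-- Euclidean norm of the concatenated vector `(v₁, v₂) ∈ ℝ²ⁿ`. -/
noncomputable def pairNorm (v₁ v₂ : E) : ℝ := Real.sqrt (‖v₁‖ ^ 2 + ‖v₂‖ ^ 2)

/-- Assumption 1: `F(x) ⊆ T_K(x)` on 𝒫. -/
def Assumption1 (F : E → Set E) (K C : Set E) : Prop :=
  ∀ x ∈ critSet K C, F x ⊆ contingentCone K x

/-- Assumption 2: `F(x) ∩ T_{∂K ∩ ∂C}(x) = ∅` on 𝒫. -/
def Assumption2 (F : E → Set E) (K C : Set E) : Prop :=
  ∀ x ∈ critSet K C, F x ∩ contingentCone (frontier K ∩ frontier C) x = ∅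

/-- Assumption 3 (transversality) at a point `x`. -/
def Assumption3At (K C : Set E) (x : E) : Prop :=
  contingentCone (frontier K) x = adjacentCone (frontier K) x ∧
  contingentCone C x = adjacentCone C x ∧
  ∃ N ∈ 𝓝 x, ∃ c > 0, ∃ α ∈ Ico (0:ℝ) 1,
    ∀ x₁ ∈ (frontier K \ C) ∩ N, ∀ x₂ ∈ (frontier C \ frontier K) ∩ N,
      ∃ v₁ ∈ contingentCone (frontier K) x₁, ∃ v₂ ∈ contingentCone C x₂,
        pairNorm v₁ v₂ ≤ c * ‖x₁ - x₂‖ ∧ ‖(x₂ - x₁) - (v₁ - v₂)‖ ≤ α * ‖x₁ - x₂‖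

/-- Assumption 3 (transversality) on 𝒫. -/
def Assumption3 (K C : Set E) : Prop := ∀ x ∈ critSet K C, Assumption3At K C x

/-- The transversality condition (◇) for a pair of sets at `x₀`. -/
def TransversalAt (K₁ K₂ : Set E) (x₀ : E) : Prop :=
  ∃ N ∈ 𝓝 x₀, ∃ c > 0, ∃ α ∈ Ico (0:ℝ) 1,
    ∀ x₁ ∈ (frontier K₁ \ K₂) ∩ N, ∀ x₂ ∈ (frontier K₂ \ K₁) ∩ N,
      ∃ v₁ ∈ contingentCone K₁ x₁, ∃ v₂ ∈ contingentCone K₂ x₂,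
        pairNorm v₁ v₂ ≤ c * ‖x₁ - x₂‖ ∧ ‖(x₂ - x₁) - (v₁ - v₂)‖ ≤ α * ‖x₁ - x₂‖

/-!
Let `x ∈ ∂K ∩ int C` and `v ∈ F x`. The nearest point to `v` in `F y` is a selection of `F`
which is continuous near `x` (by lower and upper semicontinuity of `F` and convexity of `F x`)
and equals `v` at `x`. By Peano's theorem the ODE driven by this selection has a solution `φ`
from `x`; it solves `Σ` for a short time and has right derivative `v` at `0`. Forward invariance
keeps `φ` in `K`, so its difference quotients at `0` exhibit `v` as a contingent direction.
-/

open scoped NNReal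
open Metric

section NearestPoint

variable {X : Type*} [MetricSpace X]

open Classical in
noncomputable def nearestPt (S : Set X) (v : X) : X :=
  if h : ∃ p ∈ S, dist v p = infDist v S then h.choose else v

lemma nearestPt_spec {S : Set X} {v : X} (h : ∃ p ∈ S, dist v p = infDist v S) :
    nearestPt S v ∈ S ∧ dist v (nearestPt S v) = infDist v S := by
  rw [nearestPt, dif_pos h]
  exact h.choose_spec

lemma IsClosed.nearestPt_spec [ProperSpace X] {S : Set X} (hS : IsClosed S) (hne : S.Nonempty)
    (v : X) : nearestPt S v ∈ S ∧ dist v (nearestPt S v) = infDist v S :=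
  let ⟨p, hp, hd⟩ := hS.exists_infDist_eq_dist hne v
  _root_.nearestPt_spec ⟨p, hp, hd.symm⟩

lemma nearestPt_eq_self {S : Set X} {v : X} (hv : v ∈ S) : nearestPt S v = v := by
  have h := (nearestPt_spec ⟨v, hv, by rw [dist_self, infDist_zero_of_mem hv]⟩).2
  rw [infDist_zero_of_mem hv, dist_eq_zero] at h
  exact h.symm

end NearestPoint

/-- The parallelogram law at the midpoint of `p` and `q`, which lies in `S`. -/
lemma Convex.dist_sq_le_of_mem {S : Set E} (hS : Convex ℝ S) {p q : E} (hp : p ∈ S) (hq : q ∈ S)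
    (v : E) :
    dist p q ^ 2 ≤ 2 * (dist v p ^ 2 + dist v q ^ 2) - 4 * infDist v S ^ 2 := by
  have hmid : infDist v S ≤ ‖v - midpoint ℝ p q‖ := by
    rw [← dist_eq_norm]
    exact infDist_le_dist_of_mem (hS.segment_subset hp hq (midpoint_mem_segment p q))
  have hpar := parallelogram_law_with_norm ℝ (v - p) (v - q)
  have hsum : v - p + (v - q) = (2 : ℝ) • (v - midpoint ℝ p q) := by
    rw [midpoint_eq_smul_add, invOf_eq_inv]
    module
  rw [hsum, norm_smul, Real.norm_ofNat, sub_sub_sub_cancel_left] at hpar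
  rw [dist_comm p q, dist_eq_norm, dist_eq_norm, dist_eq_norm]
  nlinarith [pow_le_pow_left₀ infDist_nonneg hmid 2]

lemma dist_nearestPt_le [ProperSpace E] {S₀ S : Set E} (hS₀ : IsClosed S₀) (hS₀ne : S₀.Nonempty)
    (hS₀c : Convex ℝ S₀) (hS : IsClosed S) {v : E} {η : ℝ}
    (hlow : ∃ z ∈ S, dist z (nearestPt S₀ v) < η) (hup : S ⊆ thickening η S₀) :
    dist (nearestPt S v) (nearestPt S₀ v) ≤ η + √(8 * η * (infDist v S₀ + η)) := by
  obtain ⟨hp₀, hvp₀⟩ := hS₀.nearestPt_spec hS₀ne v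
  obtain ⟨z, hz, hzp₀⟩ := hlow
  obtain ⟨hp, hvp⟩ := hS.nearestPt_spec ⟨z, hz⟩ v
  set p₀ := nearestPt S₀ v
  set p := nearestPt S v
  set d₀ := infDist v S₀
  obtain ⟨q, hq, hpq⟩ := mem_thickening_iff.mp (hup hp)
  have hvp_le : dist v p ≤ d₀ + η := by
    rw [hvp]
    calc infDist v S ≤ dist v z := infDist_le_dist_of_mem hz
      _ ≤ dist v p₀ + dist z p₀ := dist_triangle_right _ _ _
      _ ≤ d₀ + η := by rw [hvp₀]; exact add_le_add_right hzp₀.le _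
  have hvq : dist v q ≤ d₀ + 2 * η := by linarith [dist_triangle v p q]
  -- `p₀` and `q` both nearly minimize the distance to `v` on the convex set `S₀`.
  have hp₀q : dist p₀ q ≤ √(8 * η * (d₀ + η)) := by
    have hquad := hS₀c.dist_sq_le_of_mem hp₀ hq v
    rw [hvp₀] at hquad
    refine le_trans (le_abs_self _) (Real.abs_le_sqrt ?_)
    nlinarith [pow_le_pow_left₀ dist_nonneg hvq 2, dist_nonneg (x := v) (y := q)]
  linarith [dist_triangle p q p₀, dist_comm p₀ q]

lemma continuousAt_nearestPt [ProperSpace E] {F : E → Set E} {x₀ : E}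
    (hF : SVContinuousAt F (𝓝 x₀) x₀) (hcl : ∀ᶠ y in 𝓝 x₀, (F y).Nonempty ∧ IsClosed (F y))
    (hconv : Convex ℝ (F x₀)) (v : E) :
    ContinuousAt (fun y => nearestPt (F y) v) x₀ := by
  obtain ⟨hne₀, hcl₀⟩ := hcl.self_of_nhds
  set d₀ := infDist v (F x₀)
  let bound : ℝ → ℝ := fun η => η + √(8 * η * (d₀ + η))
  have hbound : Tendsto bound (𝓝 0) (𝓝 0) := by
    have : Continuous bound := by fun_prop
    simpa [bound] using this.tendsto 0
  rw [ContinuousAt, Metric.tendsto_nhds]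
  intro ε hε
  obtain ⟨η, hbη, hη⟩ := ((hbound.eventually (gt_mem_nhds hε)).filter_mono
    nhdsWithin_le_nhds |>.and (self_mem_nhdsWithin : Ioi (0 : ℝ) ∈ 𝓝[>] 0)).exists
  have hlow := hF.1 _ isOpen_ball
    ⟨_, (hcl₀.nearestPt_spec hne₀ v).1, mem_ball_self hη⟩
  have hup := hF.2 _ isOpen_thickening (self_subset_thickening hη _)
  filter_upwards [hlow, hup, hcl] with y ⟨z, hz, hzη⟩ hyη ⟨_, hy⟩
  exact (dist_nearestPt_le hcl₀ hne₀ hconv hy ⟨z, hz, hzη⟩ hyη).trans_lt hbη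

theorem mem_contingentCone_of_hasDerivWithinAt {φ : ℝ → E} {v : E} {K : Set E}
    (hφ : HasDerivWithinAt φ v (Ioi 0) 0) (hK : ∀ᶠ t in 𝓝[>] 0, φ t ∈ K) :
    v ∈ contingentCone K (φ 0) := by
  rw [hasDerivWithinAt_iff_tendsto_slope' (by simp : (0 : ℝ) ∉ Ioi 0)] at hφ
  obtain ⟨t, ht, htK⟩ := exists_seq_forall_of_frequently (hK.and self_mem_nhdsWithin).frequently
  refine ⟨t, fun i => slope φ 0 (t i), fun i => (htK i).2, tendsto_nhds_of_tendsto_nhdsWithin ht,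
    hφ.comp ht, fun i => ?_⟩
  dsimp only
  rw [slope_def_module, sub_zero, smul_inv_smul₀ (htK i).2.ne', add_sub_cancel]
  exact (htK i).1

section ClosedBallRetraction

variable {V : Type*} [NormedAddCommGroup V] [NormedSpace ℝ V]

noncomputable def closedBallRetraction (x : V) (r : ℝ) (y : V) : V :=
  x + (r / max r ‖y - x‖) • (y - x)

lemma continuous_closedBallRetraction (x : V) {r : ℝ} (hr : 0 < r) :
    Continuous (closedBallRetraction x r) := by
  unfold closedBallRetraction
  have hpos : ∀ y : V, max r ‖y - x‖ ≠ 0 := fun y => (lt_max_of_lt_left hr).ne'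
  fun_prop (disch := exact hpos _)

lemma closedBallRetraction_mem (x y : V) {r : ℝ} (hr : 0 < r) :
    closedBallRetraction x r y ∈ closedBall x r := by
  have hmax : 0 < max r ‖y - x‖ := lt_max_of_lt_left hr
  rw [mem_closedBall, dist_eq_norm, closedBallRetraction, add_sub_cancel_left, norm_smul,
    Real.norm_eq_abs, abs_of_pos (div_pos hr hmax), div_mul_eq_mul_div, div_le_iff₀ hmax]
  exact mul_le_mul_of_nonneg_left (le_max_right _ _) hr.le

lemma closedBallRetraction_of_mem {x y : V} {r : ℝ} (hr : 0 < r) (hy : y ∈ closedBall x r) :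
    closedBallRetraction x r y = y := by
  rw [mem_closedBall, dist_eq_norm] at hy
  rw [closedBallRetraction, max_eq_left hy, div_self hr.ne', one_smul, add_sub_cancel]

end ClosedBallRetraction

section EulerPolygon

variable {V : Type*} [NormedAddCommGroup V] [NormedSpace ℝ V]

noncomputable def eulerNode (f : V → V) (x : V) (h : ℝ) : ℕ → V
  | 0 => x
  | k + 1 => eulerNode f x h k + h • f (eulerNode f x h k)

noncomputable def eulerVelocity (f : V → V) (x : V) (h s : ℝ) : V :=
  f (eulerNode f x h ⌊s / h⌋₊)

noncomputable def eulerPolygon (f : V → V) (x : V) (h t : ℝ) : V :=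
  x + ∫ s in (0 : ℝ)..t, eulerVelocity f x h s

variable {f : V → V} {x : V} {h : ℝ} {M : ℝ≥0}

lemma stronglyMeasurable_eulerVelocity : StronglyMeasurable (eulerVelocity f x h) :=
  (StronglyMeasurable.of_discrete (f := fun k : ℕ => f (eulerNode f x h k))).comp_measurable
    (Nat.measurable_floor.comp (measurable_id.div_const h))

lemma norm_eulerVelocity_le (hM : ∀ y, ‖f y‖ ≤ M) (s : ℝ) : ‖eulerVelocity f x h s‖ ≤ M :=
  hM _

lemma intervalIntegrable_eulerVelocity (hM : ∀ y, ‖f y‖ ≤ M) (a b : ℝ) :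
    IntervalIntegrable (eulerVelocity f x h) volume a b :=
  (intervalIntegrable_const (c := (M : ℝ))).mono_fun
    stronglyMeasurable_eulerVelocity.aestronglyMeasurable
    (Eventually.of_forall fun s => by simpa using norm_eulerVelocity_le hM s)

lemma eulerPolygon_sub_eulerPolygon [CompleteSpace V] (hM : ∀ y, ‖f y‖ ≤ M) (a b : ℝ) :
    eulerPolygon f x h b - eulerPolygon f x h a = ∫ s in a..b, eulerVelocity f x h s := by
  rw [eulerPolygon, eulerPolygon, add_sub_add_left_eq_sub]
  exact intervalIntegral.integral_interval_sub_left (intervalIntegrable_eulerVelocity hM _ _)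
    (intervalIntegrable_eulerVelocity hM _ _)

lemma lipschitzWith_eulerPolygon [CompleteSpace V] (hM : ∀ y, ‖f y‖ ≤ M) :
    LipschitzWith M (eulerPolygon f x h) := by
  refine LipschitzWith.of_dist_le_mul fun b a => ?_
  rw [dist_eq_norm, eulerPolygon_sub_eulerPolygon hM, Real.dist_eq]
  exact intervalIntegral.norm_integral_le_of_norm_le_const fun s _ => norm_eulerVelocity_le hM s

@[simp]
lemma eulerPolygon_zero : eulerPolygon f x h 0 = x := by
  simp [eulerPolygon]

lemma eulerVelocity_eq_of_mem_Ico (hh : 0 < h) {k : ℕ} {s : ℝ}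
    (hs : s ∈ Ico (k * h) ((k + 1) * h)) : eulerVelocity f x h s = f (eulerNode f x h k) := by
  have hfloor : ⌊s / h⌋₊ = k := by
    rw [Nat.floor_eq_iff (div_nonneg ((by positivity : (0 : ℝ) ≤ k * h).trans hs.1) hh.le),
      le_div_iff₀ hh, div_lt_iff₀ hh]
    exact hs
  rw [eulerVelocity, hfloor]

lemma eulerPolygon_natCast_mul [CompleteSpace V] (hh : 0 < h) (hM : ∀ y, ‖f y‖ ≤ M) (k : ℕ) :
    eulerPolygon f x h (k * h) = eulerNode f x h k := by
  induction k with
  | zero => simp [eulerNode]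
  | succ k ih =>
    have hstep : ∫ s in (k * h)..((k + 1) * h), eulerVelocity f x h s
        = h • f (eulerNode f x h k) := by
      rw [intervalIntegral.integral_congr_Ioo_of_le (by nlinarith)
        (fun s hs => eulerVelocity_eq_of_mem_Ico hh (Ioo_subset_Ico_self hs)),
        intervalIntegral.integral_const]
      congr 1
      ring
    rw [eulerNode, ← hstep, ← ih, Nat.cast_succ, ← eulerPolygon_sub_eulerPolygon hM]
    abel

lemma norm_eulerPolygon_sub_eulerNode_le [CompleteSpace V] (hh : 0 < h) (hM : ∀ y, ‖f y‖ ≤ M)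
    {s : ℝ} (hs : 0 ≤ s) :
    ‖eulerPolygon f x h s - eulerNode f x h ⌊s / h⌋₊‖ ≤ M * h := by
  have hlo : ⌊s / h⌋₊ * h ≤ s := (le_div_iff₀ hh).mp (Nat.floor_le (div_nonneg hs hh.le))
  have hhi : s < (⌊s / h⌋₊ + 1) * h := (div_lt_iff₀ hh).mp (Nat.lt_floor_add_one _)
  rw [← eulerPolygon_natCast_mul hh hM, ← dist_eq_norm]
  refine ((lipschitzWith_eulerPolygon hM).dist_le_mul _ _).trans ?_
  rw [Real.dist_eq, abs_of_nonneg (by linarith)]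
  exact mul_le_mul_of_nonneg_left (by linarith) M.coe_nonneg

end EulerPolygon

section Peano

open scoped BoundedContinuousFunction

lemma exists_subseq_tendsto_of_lipschitzWith {Y : Type*} [MetricSpace Y] [ProperSpace Y]
    {u : ℕ → ℝ → Y} {K : ℝ≥0}
    (hu : ∀ k, LipschitzWith K (u k)) {x : Y} (hu0 : ∀ k, u k 0 = x) {T : ℝ} (hT : 0 ≤ T) :
    ∃ φ : ℝ → Y, Continuous φ ∧ ∃ σ : ℕ → ℕ, StrictMono σ ∧
      ∀ t ∈ Icc 0 T, Tendsto (fun j => u (σ j) t) atTop (𝓝 (φ t)) := by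
  let U : ℕ → Icc 0 T →ᵇ Y := fun k =>
    .mkOfCompact ⟨fun t => u k t, (hu k).continuous.comp continuous_subtype_val⟩
  have hUball : ∀ g ∈ range U, ∀ t, g t ∈ closedBall x (K * T) := by
    rintro _ ⟨k, rfl⟩ t
    rw [mem_closedBall, ← hu0 k]
    refine ((hu k).dist_le_mul _ _).trans (mul_le_mul_of_nonneg_left ?_ K.coe_nonneg)
    rw [Real.dist_eq, sub_zero, abs_of_nonneg t.2.1]
    exact t.2.2
  have hUlip : ∀ g : range U, LipschitzWith K (g : Icc 0 T → Y) := by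
    rintro ⟨_, k, rfl⟩
    have hlip := (hu k).comp (LipschitzWith.subtype_val (Icc 0 T))
    rwa [mul_one] at hlip
  have hcpt : IsCompact (closure (range U)) :=
    BoundedContinuousFunction.arzela_ascoli _ (isCompact_closedBall x (K * T)) _
      (fun g t hg => hUball g hg t)
      (LipschitzWith.uniformEquicontinuous _ K hUlip).equicontinuous
  obtain ⟨ψ, -, σ, hσ, hlim⟩ := hcpt.tendsto_subseq fun k => subset_closure ⟨k, rfl⟩
  refine ⟨fun t => ψ (projIcc 0 T hT t), ψ.continuous.comp continuous_projIcc, σ, hσ,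
    fun t ht => ?_⟩
  simp only [projIcc_of_mem hT ht]
  exact ((continuous_eval_const (⟨t, ht⟩ : Icc 0 T)).tendsto ψ).comp hlim

/-- Peano's theorem: a subsequence of the Euler polygons with steps `1 / (k + 1)` converges to a
solution. -/
theorem exists_continuous_eq_add_integral {V : Type*} [NormedAddCommGroup V] [NormedSpace ℝ V]
    [ProperSpace V] {f : V → V} (hf : Continuous f) {M : ℝ≥0}
    (hM : ∀ y, ‖f y‖ ≤ M) (x : V) {T : ℝ} (hT : 0 ≤ T) :
    ∃ φ : ℝ → V, Continuous φ ∧ ∀ t ∈ Icc 0 T, φ t = x + ∫ s in (0 : ℝ)..t, f (φ s) := by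
  set h : ℕ → ℝ := fun k => 1 / (k + 1)
  have hh : ∀ k, 0 < h k := fun k => by positivity
  obtain ⟨φ, hφ, σ, hσ, hlim⟩ := exists_subseq_tendsto_of_lipschitzWith
    (u := fun k => eulerPolygon f x (h k)) (fun _ => lipschitzWith_eulerPolygon hM)
    (fun _ => eulerPolygon_zero) hT
  have hh0 : Tendsto (fun j => h (σ j)) atTop (𝓝 0) :=
    tendsto_one_div_add_atTop_nhds_zero_nat.comp hσ.tendsto_atTop
  have hnode : ∀ s ∈ Icc 0 T, Tendsto (fun j => eulerNode f x (h (σ j)) ⌊s / h (σ j)⌋₊)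
      atTop (𝓝 (φ s)) := by
    intro s hs
    have hbound : Tendsto (fun j => M * h (σ j) + dist (eulerPolygon f x (h (σ j)) s) (φ s))
        atTop (𝓝 0) := by
      simpa using (hh0.const_mul (M : ℝ)).add (tendsto_iff_dist_tendsto_zero.mp (hlim s hs))
    refine tendsto_iff_dist_tendsto_zero.mpr
      (squeeze_zero (fun _ => dist_nonneg) (fun j => ?_) hbound)
    refine (dist_triangle _ (eulerPolygon f x (h (σ j)) s) _).trans (add_le_add ?_ le_rfl)
    rw [dist_comm, dist_eq_norm]
    exact norm_eulerPolygon_sub_eulerNode_le (hh _) hM hs.1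
  refine ⟨φ, hφ, fun t ht => tendsto_nhds_unique (hlim t ht) (tendsto_const_nhds.add ?_)⟩
  refine intervalIntegral.tendsto_integral_filter_of_dominated_convergence (fun _ => (M : ℝ))
    (Eventually.of_forall fun _ => stronglyMeasurable_eulerVelocity.aestronglyMeasurable)
    (Eventually.of_forall fun _ => ae_of_all _ fun s _ => norm_eulerVelocity_le hM s)
    intervalIntegrable_const (ae_of_all _ fun s hs => ?_)
  rw [uIoc_of_le ht.1] at hs
  exact (hf.tendsto _).comp (hnode s ⟨hs.1.le, hs.2.trans ht.2⟩)

end Peano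

theorem exists_bounded_continuous_selection [ProperSpace E] {F : E → Set E} {C : Set E}
    (hSA : StandingAssumption F C) {x v : E} (hx : x ∈ interior C) (hv : v ∈ F x) :
    ∃ r > 0, ∃ g : E → E, Continuous g ∧ (∃ M : ℝ≥0, ∀ y, ‖g y‖ ≤ M) ∧ g x = v ∧
      ∀ y ∈ closedBall x r, y ∈ C ∧ g y ∈ F y := by
  obtain ⟨r₁, hr₁, hball⟩ := isOpen_iff.mp isOpen_interior x hx
  have hr : 0 < r₁ / 2 := half_pos hr₁
  have hC : closedBall x (r₁ / 2) ⊆ interior C :=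
    (closedBall_subset_ball (half_lt_self hr₁)).trans hball
  set f : E → E := fun y => nearestPt (F y) v
  have hf : ContinuousOn f (closedBall x (r₁ / 2)) := by
    intro y hy
    refine (continuousAt_nearestPt (hSA.continuous y) ?_
      (hSA.convex_images y (interior_subset (hC hy))) v).continuousWithinAt
    filter_upwards [isOpen_interior.mem_nhds (hC hy)] with z hz
    exact ⟨hSA.nonempty_images z (interior_subset hz), hSA.closed_images z (interior_subset hz)⟩
  obtain ⟨M, hM⟩ := (isCompact_closedBall x (r₁ / 2)).exists_bound_of_continuousOn hf
  -- Composing with the retraction makes the selection global and bounded, as Peano's theorem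
  -- requires.
  have hretr := fun y => closedBallRetraction_mem x y hr
  refine ⟨r₁ / 2, hr, f ∘ closedBallRetraction x (r₁ / 2),
    hf.comp_continuous (continuous_closedBallRetraction x hr) hretr,
    ⟨M.toNNReal, fun y => (hM _ (hretr y)).trans (Real.le_coe_toNNReal M)⟩, ?_, fun y hy => ?_⟩
  · simp [f, closedBallRetraction_of_mem hr (mem_closedBall_self hr.le),
      nearestPt_eq_self hv]
  · have hyC : y ∈ C := interior_subset (hC hy)
    refine ⟨hyC, ?_⟩
    rw [Function.comp_apply, closedBallRetraction_of_mem hr hy]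
    exact ((hSA.closed_images y hyC).nearestPt_spec (hSA.nonempty_images y hyC) v).1

theorem exists_isSolution_hasDerivWithinAt [ProperSpace E] {F : E → Set E} {C : Set E}
    (hSA : StandingAssumption F C) {x v : E} (hx : x ∈ interior C) (hv : v ∈ F x) :
    ∃ T > 0, ∃ φ : ℝ → E, IsSolution F C (Icc 0 T) φ ∧ φ 0 = x ∧
      HasDerivWithinAt φ v (Ioi 0) 0 := by
  obtain ⟨r, hr, g, hg, ⟨M, hM⟩, hgx, hgF⟩ := exists_bounded_continuous_selection hSA hx hv
  obtain ⟨φ, hφ, hφg⟩ := exists_continuous_eq_add_integral hg hM x zero_le_one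
  have hφ0 : φ 0 = x := by simpa using hφg 0 ⟨le_rfl, zero_le_one⟩
  obtain ⟨δ, hδ, hδr⟩ := continuousAt_iff.mp hφ.continuousAt r hr
  set T := min 1 (δ / 2)
  have hT : 0 < T := lt_min one_pos (half_pos hδ)
  have hφball : ∀ t ∈ Icc 0 T, φ t ∈ closedBall x r := by
    intro t ht
    rw [← hφ0]
    refine (hδr ?_).le
    rw [Real.dist_eq, sub_zero, abs_of_nonneg ht.1]
    linarith [ht.2, min_le_right 1 (δ / 2)]
  have hφeq : ∀ t ∈ Icc 0 T, φ t = φ 0 + ∫ s in (0 : ℝ)..t, g (φ s) := fun t ht =>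
    hφ0 ▸ hφg t ⟨ht.1, ht.2.trans (min_le_left _ _)⟩
  refine ⟨T, hT, φ, ⟨Or.inl ⟨T, hT.le, rfl⟩, fun t ht => (hgF _ (hφball t ht)).1,
    fun s => g (φ s), ?_, fun t ht => ⟨(hg.comp hφ).intervalIntegrable _ _, hφeq t ht⟩⟩, hφ0, ?_⟩
  · rw [ae_restrict_iff' measurableSet_Icc]
    exact ae_of_all _ fun s hs => (hgF _ (hφball s hs)).2
  · have hderiv : HasDerivAt (fun t => φ 0 + ∫ s in (0 : ℝ)..t, g (φ s)) v 0 := by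
      simpa [hφ0, hgx] using ((hg.comp hφ).integral_hasStrictDerivAt 0 0).hasDerivAt.const_add (φ 0)
    refine hderiv.hasDerivWithinAt.congr_of_eventuallyEq ?_ (by simp)
    filter_upwards [Ioc_mem_nhdsGT hT] with t ht using hφeq t (Ioc_subset_Icc_self ht)

/-- If the closed set `K` is forward invariant for the constrained
differential inclusion `Σ`, then `F(x) ⊆ T_K(x)` for every `x ∈ ∂K ∩ int C`. -/
theorem necessity_of_tangency {n : ℕ} (F : Euc n → Set (Euc n)) (C K : Set (Euc n))
    (hSA : StandingAssumption F C) (hK : IsClosed K)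
    (hInv : ForwardInvariant F C K) :
    ∀ x ∈ frontier K ∩ interior C, F x ⊆ contingentCone K x := by
  rintro x ⟨hxK, hxC⟩ v hv
  obtain ⟨T, hT, φ, hφ, hφ0, hφv⟩ := exists_isSolution_hasDerivWithinAt hSA hxC hv
  have hφK : ∀ t ∈ Icc 0 T, φ t ∈ K := hInv _ φ hφ (hφ0 ▸ hK.frontier_subset hxK)
  rw [← hφ0]
  refine mem_contingentCone_of_hasDerivWithinAt hφv ?_
  filter_upwards [Ioc_mem_nhdsGT hT] with t ht using hφK t (Ioc_subset_Icc_self ht)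
end

section
/- Let K, C ⊆ ℝⁿ be closed, let 𝒫 := {x ∈ ∂K ∩ ∂C : every neighborhood of x intersects C \ K}, and let F : ℝⁿ ⇉ ℝⁿ be a continuous set-valued map with F(x) ⊆ T_K(x) for all x ∈ ∂K ∩ int(C). Assume property (Pr): the map x ↦ T_K(x), restricted to ∂K, is continuous (lower and upper semicontinuous as a set-valued map) at every point of 𝒫, and for every x ∈ 𝒫 every neighborhood of x intersects ∂K ∩ int(C). Then F(x) ⊆ T_K(x) for all x ∈ 𝒫. -/
open MeasureTheory Filter Topology Set
open scoped RealInnerProductSpace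

variable {E : Type*} [NormedAddCommGroup E] [InnerProductSpace ℝ E]

lemma mem_contingentCone_iff (S : Set E) (x v : E) :
    v ∈ contingentCone S x ↔
      ∀ ε > 0, ∀ δ > 0, ∃ t : ℝ, 0 < t ∧ t < δ ∧ ∃ w : E, ‖w - v‖ < ε ∧ x + t • w ∈ S := by
  constructor
  · rintro ⟨t, w, htpos, ht0, hwv, hmem⟩ ε hε δ hδ
    have h1 : ∀ᶠ i in atTop, t i ∈ Metric.ball (0:ℝ) δ := ht0 (Metric.ball_mem_nhds 0 hδ)
    have h2 : ∀ᶠ i in atTop, w i ∈ Metric.ball v ε := hwv (Metric.ball_mem_nhds v hε)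
    obtain ⟨i, hi1, hi2⟩ := (h1.and h2).exists
    refine ⟨t i, htpos i, ?_, w i, ?_, hmem i⟩
    · have := mem_ball_iff_norm.mp hi1
      simpa using lt_of_le_of_lt (le_abs_self _) (by simpa using this)
    · simpa [dist_eq_norm] using hi2
  · intro h
    have hch : ∀ i : ℕ, ∃ t : ℝ, 0 < t ∧ t < 1 / (i + 1) ∧
        ∃ w : E, ‖w - v‖ < 1 / (i + 1) ∧ x + t • w ∈ S := by
      intro i
      exact h _ (by positivity) _ (by positivity)
    choose t ht0 htlt w hw hmem using hch
    refine ⟨t, w, ht0, ?_, ?_, hmem⟩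
    · have hb : Tendsto (fun i : ℕ => 1 / ((i : ℝ) + 1)) atTop (𝓝 0) :=
        tendsto_one_div_add_atTop_nhds_zero_nat
      exact squeeze_zero (fun i => (ht0 i).le) (fun i => (htlt i).le) hb
    · rw [tendsto_iff_norm_sub_tendsto_zero]
      have hb : Tendsto (fun i : ℕ => 1 / ((i : ℝ) + 1)) atTop (𝓝 0) :=
        tendsto_one_div_add_atTop_nhds_zero_nat
      exact squeeze_zero (fun i => norm_nonneg _) (fun i => (hw i).le) hb

lemma isClosed_contingentCone (S : Set E) (x : E) : IsClosed (contingentCone S x) := by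
  rw [← closure_subset_iff_isClosed]
  intro v hv
  rw [mem_contingentCone_iff]
  intro ε hε δ hδ
  obtain ⟨u, hu, hdist⟩ := Metric.mem_closure_iff.mp hv (ε / 2) (by positivity)
  obtain ⟨t, ht0, htδ, w, hw, hmem⟩ :=
    (mem_contingentCone_iff S x u).mp hu (ε / 2) (by positivity) δ hδ
  refine ⟨t, ht0, htδ, w, ?_, hmem⟩
  calc ‖w - v‖ ≤ ‖w - u‖ + ‖u - v‖ := norm_sub_le_norm_sub_add_norm_sub _ _ _
    _ < ε / 2 + ε / 2 := by
        refine add_lt_add hw ?_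
        rw [← dist_eq_norm]
        rw [dist_comm]
        exact hdist
    _ = ε := by ring

/-- Under property (Pr), the tangency condition on `∂K ∩ int C`
propagates to the critical set 𝒫. -/
theorem tangency_propagates_to_critSet {n : ℕ} (K C : Set (Euc n))
    (F : Euc n → Set (Euc n)) (hK : IsClosed K) (hC : IsClosed C)
    (hF : SVContinuous F)
    (hTang : ∀ x ∈ frontier K ∩ interior C, F x ⊆ contingentCone K x)
    (hPrCont : ∀ x ∈ critSet K C,
      SVContinuousAt (contingentCone K) (𝓝[frontier K] x) x)
    (hPrDense : ∀ x ∈ critSet K C, ∀ N ∈ 𝓝 x,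
      (N ∩ (frontier K ∩ interior C)).Nonempty) :
    ∀ x ∈ critSet K C, F x ⊆ contingentCone K x := by
  intro x hx v hv
  by_contra hvK
  -- find ε with ball v ε disjoint from the cone
  obtain ⟨ε, hε, hball⟩ := Metric.isOpen_iff.mp
    (isClosed_contingentCone K x).isOpen_compl v hvK
  set U : Set (Euc n) := (Metric.closedBall v (ε / 2))ᶜ with hU
  have hUopen : IsOpen U := Metric.isClosed_closedBall.isOpen_compl
  have hsubU : contingentCone K x ⊆ U := by
    intro u hu
    simp only [hU, mem_compl_iff, Metric.mem_closedBall, not_le]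
    by_contra hle
    push_neg at hle
    have : u ∈ Metric.ball v ε := by
      rw [Metric.mem_ball]
      linarith
    exact hball this hu
  -- usc of the cone along ∂K
  have husc := (hPrCont x hx).2 U hUopen hsubU
  rw [eventually_nhdsWithin_iff] at husc
  -- lsc of F
  have hlsc := (hF x).1 (Metric.ball v (ε / 2)) Metric.isOpen_ball
    ⟨v, hv, Metric.mem_ball_self (by positivity)⟩
  -- combine and use density
  have hcomb := husc.and hlsc
  obtain ⟨y, hyN, hyK, hyC⟩ := hPrDense x hx _ hcomb
  obtain ⟨hyU, u, huF, hub⟩ := hyN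
  have hcone : F y ⊆ contingentCone K y := hTang y ⟨hyK, hyC⟩
  have h1 : u ∈ U := hyU hyK (hcone huF)
  have h2 : dist u v < ε / 2 := Metric.mem_ball.mp hub
  simp only [hU, mem_compl_iff, Metric.mem_closedBall, not_le] at h1
  linarith
end

section
/- Let K, C ⊆ ℝⁿ be closed and let 𝒫 := {x ∈ ∂K ∩ ∂C : every neighborhood of x intersects C \ K}. Assume property (Pr): the map x ↦ T_K(x), restricted to ∂K, is continuous (lower and upper semicontinuous as a set-valued map) at every point of 𝒫, and for every x ∈ 𝒫 every neighborhood of x intersects ∂K ∩ int(C). Then T^a_{∂K}(x) = T_{∂K}(x) for all x ∈ 𝒫. -/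
/-!
The inclusion `T^a ⊆ T` holds for every set; for the converse it suffices that
`d(x + s v, ∂K) = o(s)` as `s → 0⁺` for every `v ∈ T_{∂K}(x)`. Lower semicontinuity of `T_K`
along `∂K` gives `d(x + s w, K) = o(s)` for every `w ∈ T_K(x)`. So if the claim failed, the points
`x + s v` would, along a sequence `s → 0⁺`, lie inside `K` at distance `≳ s` from `Kᶜ`. The balls
realizing that distance touch `∂K` at points tending to `x`, with inner normals tending to some
unit `u`, and upper semicontinuity puts the open half-space `⟪w, u⟫ > 0` into `T_K(x)`. Lower
semicontinuity then forces all proximal normals of `K` at frontier points near `x` to be close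
to `-u`, hence `T_K(x)` lies in the closed half-space `⟪w, u⟫ ≥ 0`. The touching points also trace
a tangent direction `v - ρ u` with `ρ > 0`, so `⟪v, u⟫ > 0`. Finally, moving from points outside
`K` near `x + s v` in the direction `-u` increases the distance to `K` at a linear rate, whereas
`x + s (v - c u)` stays `o(s)`-close to `K` since `v - c u ∈ T_K(x)`.
-/

open MeasureTheory Filter Topology Set
open scoped RealInnerProductSpace

variable {E : Type*} [NormedAddCommGroup E] [InnerProductSpace ℝ E]

open Metric

lemma adjacentCone_subset_contingentCone (S : Set E) (x : E) :
    adjacentCone S x ⊆ contingentCone S x := fun v hv => by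
  have ht : Tendsto (fun i : ℕ => 1 / ((i : ℝ) + 1)) atTop (𝓝 0) :=
    tendsto_one_div_add_atTop_nhds_zero_nat
  obtain ⟨w, hw, hmem⟩ := hv _ (fun i => by positivity) ht
  exact ⟨_, w, fun i => by positivity, ht, hw, hmem⟩

lemma contingentCone_mono {S T : Set E} (h : S ⊆ T) (x : E) :
    contingentCone S x ⊆ contingentCone T x := by
  rintro v ⟨t, w, ht, ht0, hw, hmem⟩
  exact ⟨t, w, ht, ht0, hw, fun i => h (hmem i)⟩

lemma contingentCone_closure_subset (S : Set E) (x : E) :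
    contingentCone (closure S) x ⊆ contingentCone S x := by
  rintro v ⟨t, w, ht, ht0, hw, hmem⟩
  have hy : ∀ i, ∃ y ∈ S, dist (x + t i • w i) y < t i * t i := fun i =>
    Metric.mem_closure_iff.1 (hmem i) _ (mul_pos (ht i) (ht i))
  choose y hyS hyd using hy
  have hdist : ∀ i, dist (w i) ((t i)⁻¹ • (y i - x)) ≤ t i := fun i => by
    have : w i - (t i)⁻¹ • (y i - x) = (t i)⁻¹ • (x + t i • w i - y i) := by
      simp [smul_sub, smul_smul, (ht i).ne']; abel
    rw [dist_eq_norm, this, norm_smul, ← dist_eq_norm, norm_inv, Real.norm_of_nonneg (ht i).le,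
      inv_mul_le_iff₀ (ht i)]
    exact (hyd i).le
  refine ⟨t, fun i => (t i)⁻¹ • (y i - x), ht, ht0,
    hw.congr_dist (squeeze_zero (fun _ => dist_nonneg) hdist ht0), fun i => ?_⟩
  simpa [smul_smul, (ht i).ne'] using hyS i

lemma smul_mem_contingentCone {S : Set E} {x v : E} (hv : v ∈ contingentCone S x) {c : ℝ}
    (hc : 0 < c) : c • v ∈ contingentCone S x := by
  obtain ⟨t, w, ht, ht0, hw, hmem⟩ := hv
  refine ⟨fun i => c⁻¹ * t i, fun i => c • w i, fun i => by have := ht i; positivity,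
    by simpa using ht0.const_mul c⁻¹, hw.const_smul c, fun i => ?_⟩
  simpa [smul_smul, mul_comm c⁻¹, mul_assoc, hc.ne'] using hmem i

lemma mem_contingentCone_of_frequently {S : Set E} {x v : E}
    (h : ∃ᶠ t in 𝓝[>] (0 : ℝ), x + t • v ∈ S) : v ∈ contingentCone S x := by
  obtain ⟨t, ht, hmem⟩ := exists_seq_forall_of_frequently
    (h.and_eventually (self_mem_nhdsWithin (s := Ioi (0 : ℝ))))
  exact ⟨t, fun _ => v, fun i => (hmem i).2, tendsto_nhds_of_tendsto_nhdsWithin ht,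
    tendsto_const_nhds, fun i => (hmem i).1⟩

lemma mem_contingentCone_of_mem_interior {S : Set E} {x : E} (hx : x ∈ interior S) (v : E) :
    v ∈ contingentCone S x := by
  refine mem_contingentCone_of_frequently (Eventually.frequently ?_)
  have : Tendsto (fun t : ℝ => x + t • v) (𝓝 0) (𝓝 x) := by
    simpa using (tendsto_const_nhds (x := x)).add ((tendsto_id (x := 𝓝 (0:ℝ))).smul_const v)
  exact nhdsWithin_le_nhds (this.eventually (mem_interior_iff_mem_nhds.1 hx))

lemma mem_adjacentCone_of_infDist_le [ProperSpace E] {S : Set E} (hS : IsClosed S)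
    (hne : S.Nonempty) {x v : E}
    (h : ∀ ε > 0, ∀ᶠ s in 𝓝[>] (0 : ℝ), infDist (x + s • v) S ≤ ε * s) :
    v ∈ adjacentCone S x := by
  intro t ht ht0
  choose z hzS hz using fun i => hS.exists_infDist_eq_dist hne (x + t i • v)
  refine ⟨fun i => (t i)⁻¹ • (z i - x), ?_, fun i => by simpa [smul_smul, (ht i).ne'] using hzS i⟩
  have hdist : ∀ i, dist ((t i)⁻¹ • (z i - x)) v = (t i)⁻¹ * infDist (x + t i • v) S := fun i => by
    have : (t i)⁻¹ • (z i - x) - v = (t i)⁻¹ • (z i - (x + t i • v)) := by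
      simp [smul_sub, smul_smul, (ht i).ne']; abel
    rw [dist_eq_norm, this, norm_smul, norm_inv, Real.norm_of_nonneg (ht i).le, hz i,
      dist_comm, dist_eq_norm]
  have ht' : Tendsto t atTop (𝓝[>] 0) := tendsto_nhdsWithin_iff.2 ⟨ht0, .of_forall ht⟩
  refine tendsto_iff_dist_tendsto_zero.2 (tendsto_order.2 ⟨fun a ha => .of_forall fun i =>
    ha.trans_le dist_nonneg, fun a ha => (ht'.eventually (h (a / 2) (half_pos ha))).mono
      fun i hi => ?_⟩)
  rw [hdist, inv_mul_lt_iff₀ (ht i)]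
  nlinarith [ht i]

lemma infDist_frontier_le_add [FiniteDimensional ℝ E] (K : Set E) (p : E) :
    infDist p (frontier K) ≤ infDist p K + infDist p Kᶜ := by
  by_cases hp : p ∈ K
  · rcases eq_or_ne K univ with rfl | hK
    · simp [infDist_nonneg]
    obtain ⟨y, hy, hpy⟩ := exists_mem_frontier_infDist_compl_eq_dist hp hK
    linarith [infDist_le_dist_of_mem (x := p) hy, infDist_nonneg (x := p) (s := K)]
  · rcases K.eq_empty_or_nonempty with rfl | hK
    · simp [infDist_nonneg]
    obtain ⟨y, hy, hpy⟩ :=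
      exists_mem_frontier_infDist_compl_eq_dist (s := Kᶜ) hp (compl_ne_univ.2 hK)
    rw [frontier_compl, compl_compl] at *
    linarith [infDist_le_dist_of_mem (x := p) hy, infDist_nonneg (x := p) (s := Kᶜ)]

def IsProximalNormal (S : Set E) (b ν : E) : Prop :=
  ‖ν‖ = 1 ∧ ∃ r > 0, ball (b + r • ν) r ⊆ Sᶜ

lemma exists_isProximalNormal [FiniteDimensional ℝ E] {S : Set E} {p : E}
    (hp : p ∉ closure S) (hS : S.Nonempty) :
    ∃ b ∈ frontier S, dist p b = infDist p S ∧
      ∃ ν, IsProximalNormal S b ν ∧ b + infDist p S • ν = p := by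
  set r := infDist p S
  have hr : 0 < r := (infDist_pos_iff_notMem_closure hS).1 hp
  obtain ⟨b, hb, hpb⟩ := exists_mem_frontier_infDist_compl_eq_dist (s := Sᶜ)
    (fun h => hp (subset_closure h)) (compl_ne_univ.2 hS)
  rw [frontier_compl] at hb
  rw [compl_compl] at hpb
  have hbp : b + r • r⁻¹ • (p - b) = p := by
    rw [smul_smul, mul_inv_cancel₀ hr.ne', one_smul, add_sub_cancel]
  refine ⟨b, hb, hpb.symm, r⁻¹ • (p - b), ⟨?_, r, hr, ?_⟩, hbp⟩
  · rw [norm_smul, norm_inv, Real.norm_of_nonneg hr.le, ← dist_eq_norm, ← hpb,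
      inv_mul_cancel₀ hr.ne']
  · rw [hbp]; exact ball_infDist_subset_compl

lemma add_smul_mem_ball {z u w : E} (hu : ‖u‖ = 1) (hw : ‖w - u‖ < 1) {r τ : ℝ} (hτ : 0 < τ)
    (hτr : τ ≤ r) : z + τ • w ∈ ball (z + r • u) r := by
  have : z + τ • w - (z + r • u) = τ • (w - u) - (r - τ) • u := by
    simp only [smul_sub, sub_smul]; abel
  rw [mem_ball, dist_eq_norm, this]
  calc ‖τ • (w - u) - (r - τ) • u‖ ≤ ‖τ • (w - u)‖ + ‖(r - τ) • u‖ := norm_sub_le _ _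
    _ = τ * ‖w - u‖ + (r - τ) := by
      rw [norm_smul, norm_smul, hu, Real.norm_of_nonneg hτ.le,
        Real.norm_of_nonneg (sub_nonneg.2 hτr), mul_one]
    _ < r := by nlinarith

lemma IsProximalNormal.mem_contingentCone_of_compl {K : Set E} {z u w : E}
    (h : IsProximalNormal Kᶜ z u) (hw : ‖w - u‖ < 1) : w ∈ contingentCone K z := by
  obtain ⟨hu, r, hr, hball⟩ := h
  refine mem_contingentCone_of_frequently (Eventually.frequently ?_)
  filter_upwards [Ioc_mem_nhdsGT hr] with τ hτ
  simpa using hball (add_smul_mem_ball hu hw hτ.1 hτ.2)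

lemma IsProximalNormal.notMem_contingentCone {K : Set E} {b ν w : E}
    (h : IsProximalNormal K b ν) (hw : ‖w - ν‖ < 1) : w ∉ contingentCone K b := by
  obtain ⟨hν, r, hr, hball⟩ := h
  rintro ⟨τ, ω, hτ, hτ0, hω, hmem⟩
  have hων : Tendsto (fun m => ‖ω m - ν‖) atTop (𝓝 ‖w - ν‖) := (hω.sub_const ν).norm
  obtain ⟨m, hmr, hm⟩ := ((hτ0.eventually (gt_mem_nhds hr)).and
    (hων.eventually (gt_mem_nhds hw))).exists
  exact hball (add_smul_mem_ball hν hm (hτ m) hmr.le) (hmem m)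

lemma SVUpperSemicontinuousAt.mem_of_frequently {X : Type*} [NormedAddCommGroup X]
    {F : X → Set X} {l : Filter X} {x w : X}
    (hF : SVUpperSemicontinuousAt F l x) (hw : ∃ᶠ y in l, w ∈ F y) : w ∈ F x := by
  by_contra h
  obtain ⟨y, hwy, hy⟩ := (hw.and_eventually
    (hF _ isOpen_compl_singleton (subset_compl_singleton_iff.2 h))).exists
  exact hy hwy rfl

lemma exists_pos_smul_norm_sub_lt_one {u w : E} (hu : ‖u‖ = 1) (hw : 0 < ⟪w, u⟫) :
    ∃ c : ℝ, 0 < c ∧ ‖c • w - u‖ < 1 := by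
  set c := ⟪w, u⟫ / (‖w‖ ^ 2 + 1)
  have hc : 0 < c := by positivity
  have hcw : c * (‖w‖ ^ 2 + 1) = ⟪w, u⟫ := div_mul_cancel₀ _ (by positivity)
  have hsq : ‖c • w - u‖ ^ 2 < 1 := by
    rw [norm_sub_sq_real, real_inner_smul_left, norm_smul, Real.norm_of_nonneg hc.le, hu]
    nlinarith
  exact ⟨c, hc, by nlinarith [norm_nonneg (c • w - u)]⟩

lemma eq_neg_of_forall_inner_pos_imp_inner_nonpos {u ν : E} (hu : ‖u‖ = 1) (hν : ‖ν‖ = 1)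
    (h : ∀ w, 0 < ⟪w, u⟫ → ⟪w, ν⟫ ≤ 0) : ν = -u := by
  set α := ⟪ν, u⟫
  have huu : ⟪u, u⟫ = (1 : ℝ) := by rw [real_inner_self_eq_norm_sq, hu, one_pow]
  have hνν : ⟪ν, ν⟫ = (1 : ℝ) := by rw [real_inner_self_eq_norm_sq, hν, one_pow]
  have hα : α ≤ 0 := by
    have := h u (by rw [huu]; exact one_pos); rwa [real_inner_comm] at this
  have hα1 : -1 ≤ α := by
    have := abs_real_inner_le_norm ν u
    rw [hν, hu, one_mul] at this
    exact (abs_le.1 this).1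
  -- `w = ν - (α - δ) u` lies in the open half-space for every `δ > 0`
  have hδ : ∀ δ : ℝ, 0 < δ → 1 - α ^ 2 + δ * α ≤ 0 := fun δ hδ => by
    have := h (ν - (α - δ) • u) (by
      rw [inner_sub_left, real_inner_smul_left, huu]; linarith)
    rw [inner_sub_left, real_inner_smul_left, hνν, real_inner_comm] at this
    linarith
  have hαm1 : α = -1 := by
    by_contra hne
    have hlt : -1 < α := lt_of_le_of_ne hα1 (Ne.symm hne)
    have h1 : 0 < 1 - α ^ 2 := by nlinarith
    nlinarith [hδ _ (half_pos h1), mul_pos h1 (show 0 < 1 + α / 2 by linarith)]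
  have : ‖ν + u‖ ^ 2 = 0 := by rw [norm_add_sq_real, hν, hu]; linarith
  exact eq_neg_of_add_eq_zero_left (norm_eq_zero.1 (pow_eq_zero_iff two_ne_zero |>.1 this))

section Semicontinuity

variable {K : Set E} {x : E}

lemma inner_nonpos_of_frequently_isProximalNormal
    (hlsc : SVLowerSemicontinuousAt (contingentCone K) (𝓝[frontier K] x) x) {ν : E}
    (hν : ‖ν‖ = 1)
    (hn : ∀ δ > 0, ∃ᶠ b in 𝓝[frontier K] x, ∃ ν', IsProximalNormal K b ν' ∧ ‖ν' - ν‖ < δ)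
    {w : E} (hw : w ∈ contingentCone K x) : ⟪w, ν⟫ ≤ 0 := by
  by_contra! hpos
  obtain ⟨c, hc, hcw⟩ := exists_pos_smul_norm_sub_lt_one hν hpos
  set δ := (1 - ‖c • w - ν‖) / 2
  have hδ : 0 < δ := by simp only [δ]; linarith
  obtain ⟨b, ⟨ν', hν', hνδ⟩, w', hw', hwδ⟩ := ((hn δ hδ).and_eventually
    (hlsc _ isOpen_ball ⟨c • w, smul_mem_contingentCone hw hc, mem_ball_self hδ⟩)).exists
  refine hν'.notMem_contingentCone ?_ hw'
  rw [mem_ball, dist_eq_norm] at hwδ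
  calc ‖w' - ν'‖ = ‖(w' - c • w) + (c • w - ν) - (ν' - ν)‖ := by congr 1; abel
    _ ≤ ‖w' - c • w‖ + ‖c • w - ν‖ + ‖ν' - ν‖ := norm_sub_le_of_le (norm_add_le _ _) le_rfl
    _ < 1 := by simp only [δ] at hwδ hνδ; linarith

lemma mem_contingentCone_of_tendsto_isProximalNormal_compl
    (husc : SVUpperSemicontinuousAt (contingentCone K) (𝓝[frontier K] x) x)
    {z u' : ℕ → E} (hz : Tendsto z atTop (𝓝[frontier K] x))
    (hn : ∀ i, IsProximalNormal Kᶜ (z i) (u' i)) {u : E} (hu' : Tendsto u' atTop (𝓝 u))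
    (hu : ‖u‖ = 1) {w : E} (hw : 0 < ⟪w, u⟫) : w ∈ contingentCone K x := by
  obtain ⟨c, hc, hcw⟩ := exists_pos_smul_norm_sub_lt_one hu hw
  have hev : ∀ᶠ i in atTop, c • w ∈ contingentCone K (z i) :=
    ((tendsto_const_nhds.sub hu').norm.eventually (gt_mem_nhds hcw)).mono
      fun i hi => (hn i).mem_contingentCone_of_compl hi
  simpa [smul_smul, hc.ne'] using
    smul_mem_contingentCone (husc.mem_of_frequently (hz.frequently hev.frequently)) (inv_pos.2 hc)

lemma frequently_exists_isProximalNormal [FiniteDimensional ℝ E] (hK : IsClosed K)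
    (hx : x ∈ frontier K) : ∃ᶠ b in 𝓝[frontier K] x, ∃ ν, IsProximalNormal K b ν := by
  rw [Filter.frequently_iff]
  intro U hU
  obtain ⟨r, hr, hsub⟩ := Metric.mem_nhdsWithin_iff.1 hU
  have hxc : x ∈ closure Kᶜ := frontier_subset_closure (frontier_compl K ▸ hx)
  obtain ⟨ζ, hζ, hζx⟩ := Metric.mem_closure_iff.1 hxc (r / 2) (half_pos hr)
  have hxK : x ∈ K := hK.frontier_subset hx
  obtain ⟨b, hb, hζb, ν, hν, -⟩ := exists_isProximalNormal (hK.closure_eq.symm ▸ hζ) ⟨x, hxK⟩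
  refine ⟨b, hsub ⟨?_, hb⟩, ν, hν⟩
  have := infDist_le_dist_of_mem (x := ζ) hxK
  rw [mem_ball]
  calc dist b x ≤ dist ζ b + dist ζ x := dist_triangle_left _ _ _
    _ < r := by rw [dist_comm ζ x] at *; linarith

lemma eventually_norm_add_lt_of_isProximalNormal [FiniteDimensional ℝ E]
    (hlsc : SVLowerSemicontinuousAt (contingentCone K) (𝓝[frontier K] x) x)
    {u : E} (hu : ‖u‖ = 1) (hhalf : ∀ w, 0 < ⟪w, u⟫ → w ∈ contingentCone K x)
    {δ : ℝ} (hδ : 0 < δ) :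
    ∀ᶠ b in 𝓝[frontier K] x, ∀ ν, IsProximalNormal K b ν → ‖ν + u‖ < δ := by
  by_contra h
  rw [not_eventually] at h
  push Not at h
  obtain ⟨b, hb, hbν⟩ := exists_seq_forall_of_frequently h
  choose ν hν hνδ using hbν
  obtain ⟨ν₀, hν₀, σ, hσ, hlim⟩ := (isCompact_sphere (0 : E) 1).tendsto_subseq
    (fun k => mem_sphere_zero_iff_norm.2 (hν k).1)
  have hν₀1 : ‖ν₀‖ = 1 := mem_sphere_zero_iff_norm.1 hν₀
  have hfreq : ∀ ε > 0, ∃ᶠ b in 𝓝[frontier K] x,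
      ∃ ν', IsProximalNormal K b ν' ∧ ‖ν' - ν₀‖ < ε := fun ε hε =>
    (hb.comp hσ.tendsto_atTop).frequently
      (((tendsto_iff_norm_sub_tendsto_zero.1 hlim).eventually (gt_mem_nhds hε)).mono
        fun k hk => ⟨ν (σ k), hν (σ k), hk⟩).frequently
  have hν₀u : ν₀ = -u := eq_neg_of_forall_inner_pos_imp_inner_nonpos hu hν₀1 fun w hw =>
    inner_nonpos_of_frequently_isProximalNormal hlsc hν₀1 hfreq (hhalf w hw)
  obtain ⟨k, hk⟩ := ((hlim.add_const u).norm.eventually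
    (gt_mem_nhds (by simpa [hν₀u] using hδ))).exists
  exact (hνδ (σ k)).not_gt hk

lemma inner_nonneg_of_mem_contingentCone [FiniteDimensional ℝ E] (hK : IsClosed K)
    (hx : x ∈ frontier K) (hlsc : SVLowerSemicontinuousAt (contingentCone K) (𝓝[frontier K] x) x)
    {u : E} (hu : ‖u‖ = 1) (hhalf : ∀ w, 0 < ⟪w, u⟫ → w ∈ contingentCone K x) {w : E}
    (hw : w ∈ contingentCone K x) : 0 ≤ ⟪w, u⟫ := by
  have := inner_nonpos_of_frequently_isProximalNormal hlsc (by rwa [norm_neg]) (fun δ hδ =>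
    ((frequently_exists_isProximalNormal hK hx).and_eventually
      (eventually_norm_add_lt_of_isProximalNormal hlsc hu hhalf hδ)).mono
      fun b ⟨⟨ν, hν⟩, hb⟩ => ⟨ν, hν, by simpa using hb ν hν⟩) hw
  rwa [inner_neg_right, neg_nonpos] at this

end Semicontinuity

section Tangency

variable {K : Set E} {x : E}

lemma frequently_infDist_add_smul_le {y w w' : E} (hw' : w' ∈ contingentCone K y) {s c : ℝ}
    (hc : ‖w - w'‖ < c) :
    ∃ᶠ z in 𝓝[>] s, infDist (x + z • w) K ≤ dist (x + s • w) y + c * (z - s) := by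
  obtain ⟨τ, ω, hτ, hτ0, hω, hmem⟩ := hw'
  have hz : Tendsto (fun m => s + τ m) atTop (𝓝[>] s) := tendsto_nhdsWithin_iff.2
    ⟨by simpa using tendsto_const_nhds.add hτ0, .of_forall fun m => by simpa using hτ m⟩
  refine hz.frequently (Eventually.frequently ?_)
  filter_upwards [((tendsto_const_nhds (x := w)).sub hω).norm.eventually (gt_mem_nhds hc)] with m hm
  have hsplit : x + (s + τ m) • w - (y + τ m • ω m) = (x + s • w - y) + τ m • (w - ω m) := by
    rw [add_smul, smul_sub]; abel
  calc infDist (x + (s + τ m) • w) K ≤ dist (x + (s + τ m) • w) (y + τ m • ω m) :=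
        infDist_le_dist_of_mem (hmem m)
    _ ≤ dist (x + s • w) y + τ m * ‖w - ω m‖ := by
        rw [dist_eq_norm, hsplit, dist_eq_norm]
        refine (norm_add_le _ _).trans_eq ?_
        rw [norm_smul, Real.norm_of_nonneg (hτ m).le]
    _ ≤ _ := by rw [add_sub_cancel_left]; nlinarith [hτ m]

lemma exists_ball_exists_mem_contingentCone (hK : IsClosed K)
    (hlsc : SVLowerSemicontinuousAt (contingentCone K) (𝓝[frontier K] x) x) {w : E}
    (hw : w ∈ contingentCone K x) {c : ℝ} (hc : 0 < c) :
    ∃ ρ > 0, ∀ y ∈ K, dist y x < ρ → ∃ w' ∈ contingentCone K y, ‖w - w'‖ < c := by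
  obtain ⟨ρ, hρ, hsub⟩ := Metric.mem_nhdsWithin_iff.1
    (hlsc _ isOpen_ball ⟨w, hw, mem_ball_self hc⟩)
  refine ⟨ρ, hρ, fun y hy hyx => ?_⟩
  by_cases hyi : y ∈ interior K
  · exact ⟨w, mem_contingentCone_of_mem_interior hyi w, by simpa using hc⟩
  · obtain ⟨w', hw', hw'w⟩ := hsub ⟨mem_ball.2 hyx, hK.closure_eq.symm ▸ hy, hyi⟩
    exact ⟨w', hw', by rwa [mem_ball, dist_eq_norm, norm_sub_rev] at hw'w⟩

lemma eventually_infDist_add_smul_le [FiniteDimensional ℝ E] (hK : IsClosed K) (hx : x ∈ K)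
    (hlsc : SVLowerSemicontinuousAt (contingentCone K) (𝓝[frontier K] x) x) {w : E}
    (hw : w ∈ contingentCone K x) {ε : ℝ} (hε : 0 < ε) :
    ∀ᶠ t in 𝓝[>] (0 : ℝ), infDist (x + t • w) K ≤ ε * t := by
  obtain ⟨ρ, hρ, hnear⟩ := exists_ball_exists_mem_contingentCone hK hlsc hw (half_pos hε)
  set δ := ρ / (‖w‖ + ε + 1)
  have hδ : δ * (‖w‖ + ε + 1) = ρ := div_mul_cancel₀ _ (by positivity)
  set g : ℝ → ℝ := fun s => infDist (x + s • w) K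
  have hg : Continuous g := (continuous_infDist_pt K).comp (by fun_prop)
  suffices Icc 0 δ ⊆ {s | g s ≤ ε * s} by
    filter_upwards [Ioc_mem_nhdsGT (show 0 < δ by positivity)] with t ht
    exact this ⟨ht.1.le, ht.2⟩
  refine ((isClosed_le hg (by fun_prop)).inter isClosed_Icc).Icc_subset_of_forall_exists_gt
    (by simp [g, infDist_zero_of_mem hx]) fun s ⟨hgs, hs⟩ z hz => ?_
  have hgs : g s ≤ ε * s := hgs
  obtain ⟨y, hy, hyd⟩ := hK.exists_infDist_eq_dist ⟨x, hx⟩ (x + s • w)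
  have hyx : dist y x < ρ := by
    have : dist (x + s • w) x = s * ‖w‖ := by
      rw [dist_eq_norm, add_sub_cancel_left, norm_smul, Real.norm_of_nonneg hs.1]
    have := dist_triangle_left y x (x + s • w)
    have : s * (‖w‖ + ε) ≤ δ * (‖w‖ + ε) := by gcongr; exact hs.2.le
    have : 0 < δ := by positivity
    simp only [g] at hgs
    nlinarith
  obtain ⟨w', hw', hww'⟩ := hnear y hy hyx
  obtain ⟨z', hle, hz'⟩ := ((frequently_infDist_add_smul_le hw' hww').and_eventually
    (Ioc_mem_nhdsGT hz)).exists
  refine ⟨z', ?_, hz'⟩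
  change g z' ≤ ε * z'
  simp only [g] at hgs ⊢
  rw [← hyd] at hle
  nlinarith [hz'.1]

end Tangency

lemma exists_halfspace_subset_contingentCone [FiniteDimensional ℝ E] {K : Set E} {x v : E}
    (hx : x ∈ frontier K)
    (husc : SVUpperSemicontinuousAt (contingentCone K) (𝓝[frontier K] x) x)
    {t : ℕ → ℝ} (ht : ∀ i, 0 < t i) (ht0 : Tendsto t atTop (𝓝 0)) {ε : ℝ} (hε : 0 < ε)
    (hclear : ∀ i, ε * t i ≤ infDist (x + t i • v) Kᶜ) :
    ∃ u : E, ‖u‖ = 1 ∧ (∀ w, 0 < ⟪w, u⟫ → w ∈ contingentCone K x) ∧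
      ∃ ρ : ℝ, 0 < ρ ∧ v - ρ • u ∈ contingentCone (frontier K) x := by
  have hxc : x ∈ closure Kᶜ := frontier_subset_closure (frontier_compl K ▸ hx)
  have hKc : Kᶜ.Nonempty := closure_nonempty_iff.1 ⟨x, hxc⟩
  set d : ℕ → ℝ := fun i => infDist (x + t i • v) Kᶜ
  have hp : ∀ i, x + t i • v ∉ closure Kᶜ := fun i =>
    (infDist_pos_iff_notMem_closure hKc).2 ((mul_pos hε (ht i)).trans_le (hclear i))
  choose z hz _ u hu hzu using fun i => exists_isProximalNormal (hp i) hKc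
  rw [frontier_compl] at hz
  have hratio : ∀ i, d i / t i ∈ Icc ε ‖v‖ := fun i => by
    refine ⟨(le_div_iff₀ (ht i)).2 (hclear i), (div_le_iff₀ (ht i)).2 ?_⟩
    calc d i ≤ dist (x + t i • v) x := by
          simp only [d]; rw [← infDist_closure]; exact infDist_le_dist_of_mem hxc
      _ = ‖v‖ * t i := by
          rw [dist_eq_norm, add_sub_cancel_left, norm_smul, Real.norm_of_nonneg (ht i).le,
            mul_comm]
  obtain ⟨⟨u₀, ρ⟩, ⟨hu₀, hρ⟩, σ, hσ, hlim⟩ :=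
    ((isCompact_sphere (0 : E) 1).prod isCompact_Icc).tendsto_subseq
      (x := fun i => (u i, d i / t i)) fun i => ⟨mem_sphere_zero_iff_norm.2 (hu i).1, hratio i⟩
  rw [mem_sphere_zero_iff_norm] at hu₀
  have hu' : Tendsto (fun k => u (σ k)) atTop (𝓝 u₀) := hlim.fst_nhds
  have hzeq : ∀ i, z i = x + t i • (v - (d i / t i) • u i) := fun i => by
    rw [eq_sub_of_add_eq (hzu i), smul_sub, smul_smul, mul_div_cancel₀ _ (ht i).ne']; abel
  have hdir : Tendsto (fun k => v - (d (σ k) / t (σ k)) • u (σ k)) atTop (𝓝 (v - ρ • u₀)) :=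
    tendsto_const_nhds.sub (hlim.snd_nhds.smul hu')
  have htσ := ht0.comp hσ.tendsto_atTop
  have hzx : Tendsto (fun k => z (σ k)) atTop (𝓝[frontier K] x) := by
    refine tendsto_nhdsWithin_iff.2 ⟨?_, .of_forall fun k => hz (σ k)⟩
    simpa [hzeq] using tendsto_const_nhds.add (htσ.smul hdir)
  refine ⟨u₀, hu₀, fun w hw => mem_contingentCone_of_tendsto_isProximalNormal_compl husc hzx
    (fun k => hu (σ k)) hu' hu₀ hw, ρ, hε.trans_le hρ.1, t ∘ σ, _, fun k => ht _, htσ, hdir,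
    fun k => ?_⟩
  simpa [hzeq] using hz (σ k)

section Escape

variable [FiniteDimensional ℝ E] {K : Set E} {x u : E} {η : ℝ}

lemma infDist_add_half_le_of_norm_add_lt (hK : IsClosed K) (hx : x ∈ K) (hu : ‖u‖ = 1)
    (hR : ∀ b ∈ frontier K, dist b x < η → ∀ ν, IsProximalNormal K b ν → ‖ν + u‖ < 1 / 2)
    {q : E} {h : ℝ} (hh : 0 < h) (hhq : 2 * h < infDist q K) (hq : 2 * (dist q x + h) < η) :
    infDist q K + h / 2 ≤ infDist (q - h • u) K := by
  set q' := q - h • u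
  set r' := infDist q' K
  have hqq' : dist q q' = h := by
    simp [q', norm_smul, hu, abs_of_pos hh]
  have hr' : infDist q K ≤ r' + h := hqq' ▸ infDist_le_infDist_add_dist
  have hq' : q' ∉ closure K := by
    rw [hK.closure_eq, hK.notMem_iff_infDist_pos ⟨x, hx⟩]; linarith
  obtain ⟨b, hb, hq'b, ν, hν, hbν⟩ := exists_isProximalNormal hq' ⟨x, hx⟩
  have hbx : dist b x < η := by
    have h1 := dist_triangle_left b x q'
    have h2 : r' ≤ dist q' x := infDist_le_dist_of_mem hx
    have h3 := dist_triangle_left q' x q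
    linarith
  have hνu : ⟪ν, u⟫ ≤ -3 / 4 := by
    have h1 := hR b hb hbx ν hν
    have h2 : ‖ν + u‖ ^ 2 = 2 + 2 * ⟪ν, u⟫ := by
      rw [norm_add_sq_real, hν.1, hu]; ring
    nlinarith [norm_nonneg (ν + u)]
  have hqb : q - b = r' • ν + h • u := by
    rw [eq_sub_of_add_eq hbν]; simp only [q', r']; abel
  have hsq : infDist q K ^ 2 ≤ r' ^ 2 - 3 / 2 * r' * h + h ^ 2 := by
    have h1 : infDist q K ≤ ‖r' • ν + h • u‖ := hqb ▸ dist_eq_norm q b ▸ infDist_le_dist_of_mem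
      (hK.frontier_subset hb)
    have h2 : ‖r' • ν + h • u‖ ^ 2 = r' ^ 2 + 2 * r' * h * ⟪ν, u⟫ + h ^ 2 := by
      rw [norm_add_sq_real, norm_smul, norm_smul, hν.1, hu, real_inner_smul_left,
        real_inner_smul_right, Real.norm_of_nonneg infDist_nonneg, Real.norm_of_nonneg hh.le]
      ring
    have h3 : 0 ≤ r' * h := mul_nonneg infDist_nonneg hh.le
    nlinarith [infDist_nonneg (x := q) (s := K)]
  -- `t ↦ t ^ 2 - 3 / 2 * t * h` increases on `t ≥ r - h`, so `r' < r + h / 2` would give `r < h`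
  by_contra! hcon
  nlinarith [mul_neg_of_neg_of_pos (sub_neg.2 hcon) (by linarith : 0 < r' + infDist q K - h)]

lemma infDist_add_half_le_infDist_sub_smul (hK : IsClosed K) (hx : x ∈ K) (hu : ‖u‖ = 1)
    (hR : ∀ b ∈ frontier K, dist b x < η → ∀ ν, IsProximalNormal K b ν → ‖ν + u‖ < 1 / 2)
    {q : E} (hq : q ∉ K) {S : ℝ} (hS : 0 ≤ S) (hqS : 2 * (dist q x + S) < η) :
    infDist q K + S / 2 ≤ infDist (q - S • u) K := by
  set φ : ℝ → ℝ := fun s => infDist (q - s • u) K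
  have hφ : Continuous φ := (continuous_infDist_pt K).comp (by fun_prop)
  have hpos : 0 < infDist q K := (hK.notMem_iff_infDist_pos ⟨x, hx⟩).1 hq
  suffices Icc 0 S ⊆ {s | infDist q K + s / 2 ≤ φ s} from this ⟨hS, le_rfl⟩
  refine ((isClosed_le (by fun_prop) hφ).inter isClosed_Icc).Icc_subset_of_forall_mem_nhdsWithin
    (by simp [φ]) fun s ⟨hs, hs0, hsS⟩ => ?_
  have hs : infDist q K + s / 2 ≤ φ s := hs
  have hsx : dist (q - s • u) x ≤ dist q x + s := by
    calc dist (q - s • u) x ≤ dist (q - s • u) q + dist q x := dist_triangle _ _ _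
      _ = dist q x + s := by
        rw [dist_eq_norm, sub_sub_cancel_left, norm_neg, norm_smul, hu, mul_one,
          Real.norm_of_nonneg hs0, add_comm]
  filter_upwards [Ioo_mem_nhdsGT (show s < s + min (S - s) (φ s / 2) by
    have := lt_min (sub_pos.2 hsS) (show 0 < φ s / 2 by linarith); linarith)] with z hz
  have hz' : z - s < min (S - s) (φ s / 2) := by linarith [hz.2]
  have hloc := infDist_add_half_le_of_norm_add_lt hK hx hu hR (q := q - s • u) (h := z - s)
    (sub_pos.2 hz.1) (by linarith [min_le_right (S - s) (φ s / 2)])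
    (by linarith [min_le_left (S - s) (φ s / 2)])
  have : q - s • u - (z - s) • u = q - z • u := by rw [sub_smul]; abel
  rw [this] at hloc
  show infDist q K + z / 2 ≤ φ z
  simp only [φ] at hs ⊢
  linarith

end Escape

lemma notMem_contingentCone_compl_of_inner_pos [FiniteDimensional ℝ E] {K : Set E}
    (hK : IsClosed K) {x : E} (hx : x ∈ K)
    (hlsc : SVLowerSemicontinuousAt (contingentCone K) (𝓝[frontier K] x) x)
    {u : E} (hu : ‖u‖ = 1) (hhalf : ∀ w, 0 < ⟪w, u⟫ → w ∈ contingentCone K x)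
    {v : E} (hv : 0 < ⟪v, u⟫) : v ∉ contingentCone Kᶜ x := by
  rintro ⟨s, vs, hs, hs0, hvs, hmem⟩
  set c := ⟪v, u⟫
  obtain ⟨η, hη, hR⟩ : ∃ η > 0, ∀ b ∈ frontier K, dist b x < η →
      ∀ ν, IsProximalNormal K b ν → ‖ν + u‖ < 1 / 2 := by
    obtain ⟨η, hη, hsub⟩ := Metric.mem_nhdsWithin_iff.1
      (eventually_norm_add_lt_of_isProximalNormal hlsc hu hhalf one_half_pos)
    exact ⟨η, hη, fun b hb hbx => hsub ⟨mem_ball.2 hbx, hb⟩⟩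
  have hw : v - (c / 2) • u ∈ contingentCone K x := hhalf _ (by
    rw [inner_sub_left, real_inner_smul_left, real_inner_self_eq_norm_sq, hu]; linarith)
  have hsW : Tendsto s atTop (𝓝[>] 0) := tendsto_nhdsWithin_iff.2 ⟨hs0, .of_forall hs⟩
  have hsmall : Tendsto (fun j => 2 * (dist (x + s j • vs j) x + c / 2 * s j)) atTop (𝓝 0) := by
    have : Tendsto (fun j => x + s j • vs j) atTop (𝓝 x) := by
      simpa using tendsto_const_nhds.add (hs0.smul hvs)
    simpa using ((this.dist (tendsto_const_nhds (x := x))).add (hs0.const_mul (c / 2))).const_mul 2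
  obtain ⟨j, hjK, hjv, hjη⟩ := ((hsW.eventually (eventually_infDist_add_smul_le hK hx hlsc hw
    (show 0 < c / 8 by positivity))).and (((hvs.sub_const v).norm.eventually
      (gt_mem_nhds (show ‖v - v‖ < c / 8 by simp; positivity))).and
        (hsmall.eventually (gt_mem_nhds hη)))).exists
  have hsj := hs j
  have hup := infDist_add_half_le_infDist_sub_smul hK hx hu hR (hmem j) (by positivity) hjη
  have hsplit : x + s j • vs j - (c / 2 * s j) • u =
      (x + s j • (v - (c / 2) • u)) + s j • (vs j - v) := by
    rw [smul_sub, smul_sub, smul_smul, mul_comm]; abel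
  have hdown := infDist_le_infDist_add_dist (x := x + s j • vs j - (c / 2 * s j) • u)
    (y := x + s j • (v - (c / 2) • u)) (s := K)
  rw [hsplit, dist_self_add_left, norm_smul, Real.norm_of_nonneg hsj.le] at hdown
  rw [hsplit] at hup
  nlinarith [infDist_nonneg (x := x + s j • vs j) (s := K), mul_le_mul_of_nonneg_left hjv.le hsj.le]

lemma eventually_infDist_frontier_le [FiniteDimensional ℝ E] {K : Set E} (hK : IsClosed K)
    {x : E} (hx : x ∈ frontier K)
    (hcont : SVContinuousAt (contingentCone K) (𝓝[frontier K] x) x)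
    {v : E} (hv : v ∈ contingentCone (frontier K) x) {ε : ℝ} (hε : 0 < ε) :
    ∀ᶠ s in 𝓝[>] (0 : ℝ), infDist (x + s • v) (frontier K) ≤ ε * s := by
  obtain ⟨hlsc, husc⟩ := hcont
  have hxK : x ∈ K := hK.frontier_subset hx
  by_contra h
  rw [not_eventually] at h
  obtain ⟨t, ht, hP⟩ := exists_seq_forall_of_frequently (h.and_eventually
    ((eventually_infDist_add_smul_le hK hxK hlsc (contingentCone_mono hK.frontier_subset x hv)
      (half_pos hε)).and self_mem_nhdsWithin))
  have hclear : ∀ i, ε / 2 * t i ≤ infDist (x + t i • v) Kᶜ := fun i => by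
    have := infDist_frontier_le_add K (x + t i • v)
    linarith [not_le.1 (hP i).1, (hP i).2.1]
  obtain ⟨u, hu, hhalf, ρ, hρ, hvρ⟩ := exists_halfspace_subset_contingentCone hx husc
    (fun i => (hP i).2.2) (tendsto_nhds_of_tendsto_nhdsWithin ht) (half_pos hε) hclear
  have hvu : 0 < ⟪v, u⟫ := by
    have := inner_nonneg_of_mem_contingentCone hK hx hlsc hu hhalf
      (contingentCone_mono hK.frontier_subset x hvρ)
    rw [inner_sub_left, real_inner_smul_left, real_inner_self_eq_norm_sq, hu] at this
    linarith
  have hfr : frontier K ⊆ closure Kᶜ := frontier_compl K ▸ frontier_subset_closure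
  exact notMem_contingentCone_compl_of_inner_pos hK hxK hlsc hu hhalf hvu
    (contingentCone_closure_subset _ _ (contingentCone_mono hfr x hv))

theorem adjacent_eq_contingent_on_critSet_general {n : ℕ} (K C : Set (Euc n))
    (hK : IsClosed K)
    (hPrCont : ∀ x ∈ critSet K C,
      SVContinuousAt (contingentCone K) (𝓝[frontier K] x) x) :
    ∀ x ∈ critSet K C, adjacentCone (frontier K) x = contingentCone (frontier K) x := by
  intro x hx
  refine (adjacentCone_subset_contingentCone _ _).antisymm fun v hv => ?_
  exact mem_adjacentCone_of_infDist_le isClosed_frontier ⟨x, hx.1.1⟩ fun ε hε =>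
    eventually_infDist_frontier_le hK hx.1.1 (hPrCont x hx) hv hε

/-- Under property (Pr), `T^a_{∂K}(x) = T_{∂K}(x)` for all `x ∈ 𝒫`. -/
theorem adjacent_eq_contingent_on_critSet {n : ℕ} (K C : Set (Euc n))
    (hK : IsClosed K) (hC : IsClosed C)
    (hPrCont : ∀ x ∈ critSet K C,
      SVContinuousAt (contingentCone K) (𝓝[frontier K] x) x)
    (hPrDense : ∀ x ∈ critSet K C, ∀ N ∈ 𝓝 x,
      (N ∩ (frontier K ∩ interior C)).Nonempty) :
    ∀ x ∈ critSet K C, adjacentCone (frontier K) x = contingentCone (frontier K) x :=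
  adjacent_eq_contingent_on_critSet_general K C hK hPrCont
end

section
/- Consider the constrained differential inclusion Σ and a closed set K ⊆ ℝⁿ such that F(x) ⊆ T_K(x) for every x ∈ ∂K ∩ int(C). Let φ be a solution of Σ starting from x ∈ ∂K that satisfies property (★) with constant T > 0. Then φ cannot leave K immediately; more precisely, φ([0,T]) ⊆ K for the same T appearing in (★). -/
open MeasureTheory Filter Topology Set
open scoped RealInnerProductSpace

variable {E : Type*} [NormedAddCommGroup E] [InnerProductSpace ℝ E]

/-! Let `h t = d_K(φ t)²`, absolutely continuous along the solution. At almost every `t` with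
`φ t ∉ K`, property (★) gives a nearest point `z ∈ ∂K ∩ int C` of `K` to `φ t`, and then
`ḣ t = 2⟪φ t - z, φ̇ t⟫`. One-sided Lipschitz continuity trades `φ̇ t ∈ F (φ t)` for some
`w ∈ F z ⊆ T_K z` at the cost `k ‖φ t - z‖²`, and `⟪φ t - z, w⟫ ≤ 0` because `z` is a nearest
point. Hence `ḣ ≤ 2 k h` almost everywhere with `h 0 = 0`, and Grönwall gives `h = 0` on `[0, T]`.
-/

section AbsolutelyContinuous

variable {X Y : Type*} [PseudoMetricSpace X] [PseudoMetricSpace Y]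

theorem AbsolutelyContinuousOnInterval.of_dist_le_mul {f : ℝ → X} {g : ℝ → Y} {a b K : ℝ}
    (hg : AbsolutelyContinuousOnInterval g a b)
    (hfg : ∀ x ∈ uIcc a b, ∀ y ∈ uIcc a b, dist (f x) (f y) ≤ K * dist (g x) (g y)) :
    AbsolutelyContinuousOnInterval f a b := by
  unfold AbsolutelyContinuousOnInterval at hg ⊢
  refine squeeze_zero' (Eventually.of_forall fun _ ↦ Finset.sum_nonneg fun _ _ ↦ dist_nonneg)
    ?_ (by simpa using hg.const_mul K)
  rw [eventually_inf_principal]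
  filter_upwards with ⟨n, I⟩ hnI
  rw [Finset.mul_sum]
  exact Finset.sum_le_sum fun i hi ↦ hfg _ (hnI.1 i hi).1 _ (hnI.1 i hi).2

theorem AbsolutelyContinuousOnInterval.le_exp_mul_of_ae_hasDerivAt_le {h : ℝ → ℝ} {a b c : ℝ}
    (hab : a ≤ b) (hh : AbsolutelyContinuousOnInterval h a b)
    (hderiv : ∀ᵐ x, x ∈ Ioo a b → ∀ d, HasDerivAt h d x → d ≤ c * h x) :
    h b ≤ Real.exp (c * (b - a)) * h a := by
  set H : ℝ → ℝ := fun x ↦ Real.exp (-c * x) * h x with hHdef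
  have hH : AbsolutelyContinuousOnInterval H a b :=
    (ContDiffOn.absolutelyContinuousOnInterval (by fun_prop)).fun_mul hh
  have hH_deriv : ∀ᵐ x ∂volume.restrict (Ioc a b), deriv H x ≤ 0 := by
    rw [← Measure.restrict_congr_set Ioo_ae_eq_Ioc, ae_restrict_iff' measurableSet_Ioo]
    filter_upwards [hh.ae_differentiableAt, hderiv] with x hdiff hle hx
    have hd := (hdiff (Ioo_subset_Icc_self.trans Icc_subset_uIcc hx)).hasDerivAt
    have hexp : HasDerivAt (fun x ↦ Real.exp (-c * x)) (Real.exp (-c * x) * -c) x := by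
      simpa using ((hasDerivAt_id x).const_mul (-c)).exp
    rw [(hexp.fun_mul hd).deriv]
    nlinarith [hle hx _ hd, Real.exp_pos (-c * x)]
  have hHab : H b - H a ≤ 0 := by
    rw [← hH.integral_deriv_eq_sub, intervalIntegral.integral_of_le hab]
    exact integral_nonpos_of_ae hH_deriv
  have hsplit : Real.exp (c * (b - a)) = Real.exp (c * b) * Real.exp (-c * a) := by
    rw [← Real.exp_add]; ring_nf
  calc h b = Real.exp (c * b) * H b := by
        simp only [hHdef, ← mul_assoc, ← Real.exp_add]; ring_nf; simp
    _ ≤ Real.exp (c * b) * H a := by gcongr; linarith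
    _ = Real.exp (c * (b - a)) * h a := by rw [hsplit]; simp only [hHdef]; ring

theorem AbsolutelyContinuousOnInterval.sq_infDist {γ : ℝ → X} {a b : ℝ} (hγ : AbsolutelyContinuousOnInterval γ a b) (K : Set X) :
    AbsolutelyContinuousOnInterval (fun t ↦ Metric.infDist (γ t) K ^ 2) a b := by
  have hd : AbsolutelyContinuousOnInterval (fun t ↦ Metric.infDist (γ t) K) a b :=
    hγ.of_dist_le_mul (K := 1) fun x _ y _ ↦ by
      simpa using (Metric.lipschitz_infDist_pt K).dist_le_mul (γ x) (γ y)
  simpa only [sq] using hd.fun_mul hd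

end AbsolutelyContinuous

theorem inner_sub_nonpos_of_mem_contingentCone {K : Set E} {y z w : E}
    (hmin : ∀ p ∈ K, dist y z ≤ dist y p) (hw : w ∈ contingentCone K z) :
    ⟪y - z, w⟫ ≤ 0 := by
  obtain ⟨t, v, ht, ht0, hv, hmem⟩ := hw
  -- expanding `‖y - z‖² ≤ ‖(y - z) - tᵢ vᵢ‖²`
  have hstep : ∀ i, 2 * ⟪y - z, v i⟫ ≤ t i * ‖v i‖ ^ 2 := by
    intro i
    have hle := hmin _ (hmem i)
    rw [dist_eq_norm, dist_eq_norm, show y - (z + t i • v i) = (y - z) - t i • v i by abel]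
      at hle
    have hsq := pow_le_pow_left₀ (norm_nonneg _) hle 2
    rw [norm_sub_sq_real (y - z), real_inner_smul_right, norm_smul,
      Real.norm_of_nonneg (ht i).le] at hsq
    nlinarith [ht i]
  have hlim : Tendsto (fun i ↦ t i * ‖v i‖ ^ 2) atTop (𝓝 0) := by
    simpa using ht0.mul (hv.norm.pow 2)
  have := le_of_tendsto_of_tendsto' ((tendsto_const_nhds.inner hv).const_mul 2) hlim hstep
  linarith

theorem dist_le_of_mem_projSet_frontier {V : Type*} [NormedAddCommGroup V] [NormedSpace ℝ V]
    [FiniteDimensional ℝ V] {K : Set V} {y z p : V} (hy : y ∉ K)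
    (hz : z ∈ projSet (frontier K) y) (hp : p ∈ K) : dist y z ≤ dist y p := by
  obtain ⟨q, hq, hqd⟩ := exists_mem_frontier_infDist_compl_eq_dist (s := Kᶜ) hy
    (fun h ↦ (h ▸ mem_univ p : p ∈ Kᶜ) hp)
  rw [frontier_compl] at hq
  rw [compl_compl] at hqd
  calc dist y z = Metric.infDist y (frontier K) := hz.2
    _ ≤ dist y q := Metric.infDist_le_dist_of_mem hq
    _ = Metric.infDist y K := hqd.symm
    _ ≤ dist y p := Metric.infDist_le_dist_of_mem hp

theorem HasDerivAt.sq_infDist_eq {K : Set E} {γ : ℝ → E} {x d : ℝ} {v p : E} (hp : p ∈ K)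
    (hmin : ∀ q ∈ K, dist (γ x) p ≤ dist (γ x) q) (hγ : HasDerivAt γ v x)
    (hd : HasDerivAt (fun t ↦ Metric.infDist (γ t) K ^ 2) d x) :
    d = 2 * ⟪γ x - p, v⟫ := by
  have hq := (hγ.sub_const p).norm_sq
  -- `infDist (γ ·) K ^ 2 ≤ ‖γ · - p‖ ^ 2`, with equality at `x`
  have hmax : IsLocalMax (fun t ↦ Metric.infDist (γ t) K ^ 2 - ‖γ t - p‖ ^ 2) x := by
    refine IsMaxOn.isLocalMax (fun t _ ↦ ?_) univ_mem
    have hx : Metric.infDist (γ x) K = dist (γ x) p :=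
      le_antisymm (Metric.infDist_le_dist_of_mem hp) ((Metric.le_infDist ⟨p, hp⟩).2 hmin)
    have ht := Metric.infDist_le_dist_of_mem (x := γ t) hp
    change _ ≤ Metric.infDist (γ x) K ^ 2 - ‖γ x - p‖ ^ 2
    rw [hx, ← dist_eq_norm, ← dist_eq_norm, sub_self]
    nlinarith [Metric.infDist_nonneg (x := γ t) (s := K)]
  linarith [hmax.hasDerivAt_eq_zero (hd.sub hq)]

theorem HasDerivAt.sq_infDist_le [FiniteDimensional ℝ E] {F : E → Set E} {C K : Set E}
    {γ : ℝ → E} {x k d : ℝ} {v : E} (hK : IsClosed K)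
    (hTang : ∀ z ∈ frontier K ∩ interior C, F z ⊆ contingentCone K z)
    (hOSL : ∀ z ∈ projSet (frontier K) (γ x),
      ∃ w ∈ F z, ⟪γ x - z, v⟫ ≤ ⟪γ x - z, w⟫ + k * ‖γ x - z‖ ^ 2)
    (hstar : γ x ∉ K → (projSet (frontier K) (γ x) ∩ interior C).Nonempty)
    (hγ : HasDerivAt γ v x) (hd : HasDerivAt (fun t ↦ Metric.infDist (γ t) K ^ 2) d x) :
    d ≤ 2 * k * Metric.infDist (γ x) K ^ 2 := by
  by_cases hxK : γ x ∈ K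
  · rw [hγ.sq_infDist_eq hxK (fun q _ ↦ by simp) hd, sub_self, inner_zero_left,
      Metric.infDist_zero_of_mem hxK]
    simp
  obtain ⟨z, hz, hzC⟩ := hstar hxK
  have hmin : ∀ p ∈ K, dist (γ x) z ≤ dist (γ x) p := fun p hp ↦
    dist_le_of_mem_projSet_frontier hxK hz hp
  have hzK : z ∈ K := hK.frontier_subset hz.1
  obtain ⟨w, hwF, hw⟩ := hOSL z hz
  have hw0 : ⟪γ x - z, w⟫ ≤ 0 :=
    inner_sub_nonpos_of_mem_contingentCone hmin (hTang z ⟨hz.1, hzC⟩ hwF)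
  have hdist : Metric.infDist (γ x) K = ‖γ x - z‖ := by
    rw [← dist_eq_norm]
    exact le_antisymm (Metric.infDist_le_dist_of_mem hzK) ((Metric.le_infDist ⟨z, hzK⟩).2 hmin)
  rw [hγ.sq_infDist_eq hzK hmin hd, hdist]
  linarith

theorem IsSolDomain.Icc_subset_of_Ioc_subset {D : Set ℝ} (hD : IsSolDomain D) {T : ℝ}
    (hTD : Ioc 0 T ⊆ D) : Icc 0 T ⊆ D := by
  have h0 : (0 : ℝ) ∈ D := by
    rcases hD with ⟨T, hT, rfl⟩ | ⟨T, hT, rfl⟩ | rfl <;> simp [*]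
  intro t ht
  rcases ht.1.eq_or_lt with rfl | ht0
  exacts [h0, hTD ⟨ht0, ht.2⟩]

theorem IsSolution.absolutelyContinuousOnInterval {F : E → Set E} {C : Set E} {D : Set ℝ}
    {φ : ℝ → E} {T : ℝ} (hsol : IsSolution F C D φ) (hT : 0 ≤ T) (hTD : Icc 0 T ⊆ D) :
    AbsolutelyContinuousOnInterval φ 0 T := by
  obtain ⟨-, -, g, -, hφg⟩ := hsol
  have hg : IntervalIntegrable g volume 0 T := (hφg T (hTD ⟨hT, le_rfl⟩)).1
  refine (hg.norm.absolutelyContinuousOnInterval_intervalIntegral left_mem_uIcc).of_dist_le_mul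
    (K := 1) fun x hx y hy ↦ ?_
  rw [uIcc_of_le hT] at hx hy
  have hgx := hg.mono_set (uIcc_subset_uIcc left_mem_uIcc (by rwa [uIcc_of_le hT] : x ∈ _))
  have hgy := hg.mono_set (uIcc_subset_uIcc left_mem_uIcc (by rwa [uIcc_of_le hT] : y ∈ _))
  rw [(hφg x (hTD hx)).2, (hφg y (hTD hy)).2, dist_add_left, one_mul, dist_eq_norm,
    dist_eq_norm, intervalIntegral.integral_interval_sub_left hgx hgy,
    intervalIntegral.integral_interval_sub_left hgx.norm hgy.norm, Real.norm_eq_abs]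
  exact intervalIntegral.norm_integral_le_abs_integral_norm

theorem IsSolution.ae_exists_hasDerivAt [CompleteSpace E] {F : E → Set E} {C : Set E} {D : Set ℝ}
    {φ : ℝ → E} {T : ℝ} (hsol : IsSolution F C D φ) (hT : 0 ≤ T) (hTD : Icc 0 T ⊆ D) :
    ∀ᵐ x, x ∈ Ioo 0 T → ∃ v ∈ F (φ x), HasDerivAt φ v x := by
  obtain ⟨-, -, g, hgF, hφg⟩ := hsol
  have hg : IntervalIntegrable g volume 0 T := (hφg T (hTD ⟨hT, le_rfl⟩)).1
  have hgF' : ∀ᵐ x, x ∈ Icc 0 T → g x ∈ F (φ x) :=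
    (ae_restrict_iff' measurableSet_Icc).1 (ae_mono (Measure.restrict_mono hTD le_rfl) hgF)
  filter_upwards [hg.ae_hasDerivAt_integral, hgF'] with x hder hxF hx
  have hxT : x ∈ Icc 0 T := Ioo_subset_Icc_self hx
  have hloc : φ =ᶠ[𝓝 x] fun y ↦ φ 0 + ∫ s in 0..y, g s :=
    eventually_of_mem (Ioo_mem_nhds hx.1 hx.2) fun y hy ↦
      (hφg y (hTD (Ioo_subset_Icc_self hy))).2
  refine ⟨g x, hxF hxT, ?_⟩
  rw [← uIcc_of_le hT] at hxT
  exact ((hder hxT 0 left_mem_uIcc).const_add (φ 0)).congr_of_eventuallyEq hloc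

/-- A solution starting from `∂K` satisfying property (★) with
constant `T > 0` cannot leave `K` immediately: `φ([0,T]) ⊆ K`. -/
theorem star_implies_not_leaving {n : ℕ} (F : Euc n → Set (Euc n)) (C K : Set (Euc n))
    (hSA : StandingAssumption F C) (hK : IsClosed K)
    (hTang : ∀ x ∈ frontier K ∩ interior C, F x ⊆ contingentCone K x)
    (D : Set ℝ) (φ : ℝ → Euc n) (hsol : IsSolution F C D φ)
    (hx : φ 0 ∈ frontier K)
    (T : ℝ) (hT : 0 < T) (hTD : Ioc 0 T ⊆ D)
    (hstar : ∀ t ∈ Ioc 0 T, (projSet (frontier K) (φ t) ∩ interior C).Nonempty) :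
    ∀ t ∈ Icc 0 T, φ t ∈ K := by
  have hφK : φ 0 ∈ K := hK.frontier_subset hx
  have hIccD : Icc 0 T ⊆ D := hsol.1.Icc_subset_of_Ioc_subset hTD
  have hφ := hsol.absolutelyContinuousOnInterval hT.le hIccD
  obtain ⟨M, hM⟩ := hφ.exists_bound
  have hM0 : ‖φ 0‖ ≤ M := hM 0 left_mem_uIcc
  -- the trajectory and its projections onto `∂K` stay in `closedBall 0 (3 * M)`
  obtain ⟨k, -, hOSL⟩ := hSA.osLipschitz (Metric.closedBall 0 (3 * M))
    ⟨0, by simpa using (norm_nonneg _).trans hM0⟩ (isCompact_closedBall _ _)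
  have hderiv : ∀ᵐ x, x ∈ Ioo 0 T → ∀ d, HasDerivAt (fun t ↦ Metric.infDist (φ t) K ^ 2) d x →
      d ≤ 2 * k * Metric.infDist (φ x) K ^ 2 := by
    filter_upwards [hsol.ae_exists_hasDerivAt hT.le hIccD] with x hxv hxT d hd
    obtain ⟨v, hvF, hv⟩ := hxv hxT
    have hMx : ‖φ x‖ ≤ M := hM x (Ioo_subset_Icc_self.trans Icc_subset_uIcc hxT)
    refine hv.sq_infDist_le hK hTang (fun z hz ↦ hOSL _ ?_ _ ?_ v hvF)
      (fun _ ↦ hstar x ⟨hxT.1, hxT.2.le⟩) hd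
    · rw [mem_closedBall_zero_iff]; linarith [norm_nonneg (φ x)]
    · have hz0 : dist (φ x) z ≤ dist (φ x) (φ 0) := hz.2 ▸ Metric.infDist_le_dist_of_mem hx
      rw [mem_closedBall_zero_iff]
      linarith [norm_le_norm_add_norm_sub (φ x) z, dist_eq_norm (φ x) z,
        dist_le_norm_add_norm (φ x) (φ 0)]
  intro t ht
  have hle := ((hφ.sq_infDist K).mono (uIcc_subset_uIcc left_mem_uIcc (by
    rw [uIcc_of_le hT.le]; exact ht))).le_exp_mul_of_ae_hasDerivAt_le ht.1
    (hderiv.mono fun x hx hxt ↦ hx ⟨hxt.1, hxt.2.trans_le ht.2⟩)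
  rw [Metric.infDist_zero_of_mem hφK] at hle
  have ht0 : Metric.infDist (φ t) K = 0 := by
    nlinarith [Metric.infDist_nonneg (x := φ t) (s := K)]
  exact (hK.mem_iff_infDist_zero ⟨_, hφK⟩).2 ht0
end
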